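/- arXiv:1708.03036 — 7 statements merged into one kernel-verified Lean document; each statement's English description precedes it below -/
import Mathlib

section
/- Let k be an algebraically closed field of characteristic 2 and let M ⊆ L ⊆ K be function fields of one variable over k with K finite over L and L finite over M. Let v be a place of K, let w be the place of L induced by v, and let u be the place of M induced by v (equivalently, by w). If the extension K/L is pseudo-tame at v and the extension L/M is pseudo-tame at w, then the extension K/M is pseudo-tame at v. -/
/-- A place of a function field `K` over `k`. -/
structure Place (k K : Type*) [Field k] [Field K] [Algebra k K] where
  v : K → ℤ
  v_mul : ∀ x y : K, x ≠ 0 → y ≠ 0 → v (x * y) = v x + v y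
  v_add : ∀ x y : K, x ≠ 0 → y ≠ 0 → x + y ≠ 0 → min (v x) (v y) ≤ v (x + y)
  v_surj : ∀ n : ℤ, ∃ x : K, x ≠ 0 ∧ v x = n
  v_const : ∀ c : k, c ≠ 0 → v (algebraMap k K c) = 0

/-- `K` is a function field of one variable over `k`. -/
def IsFunctionFieldOneVar (k K : Type*) [Field k] [Field K] [Algebra k K] : Prop :=
  ∃ x : K, Transcendental k x ∧
    FiniteDimensional (IntermediateField.adjoin k ({x} : Set K)) K

/-- The place `w` of the subfield `L` is the one induced by the place `v` of `K`:
there is an integer `e ≥ 1` with `v x = e * w x` for every nonzero `x ∈ L`. -/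
def Induces {k L K : Type*} [Field k] [Field L] [Field K]
    [Algebra k L] [Algebra k K] [Algebra L K]
    (v : Place k K) (w : Place k L) : Prop :=
  ∃ e : ℤ, 1 ≤ e ∧ ∀ x : L, x ≠ 0 → v.v (algebraMap L K x) = e * w.v x

/-- A finite extension `K/L` is pseudo-tame at a place `v` of `K` (with induced
place `w` of `L`): for every uniformizer `t ∈ L` at `w` there exists `h` in the
valuation ring `O_v` such that `v (t + h⁴)` is odd. -/
def ExtPseudoTameAt {k L K : Type*} [Field k] [Field L] [Field K]
    [Algebra k L] [Algebra k K] [Algebra L K]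
    (v : Place k K) (w : Place k L) : Prop :=
  ∀ t : L, t ≠ 0 → w.v t = 1 →
    ∃ h : K, (h = 0 ∨ 0 ≤ v.v h) ∧ algebraMap L K t + h ^ 4 ≠ 0 ∧
      Odd (v.v (algebraMap L K t + h ^ 4))


section PlaceHelpers
variable {k F : Type*} [Field k] [Field F] [Algebra k F] (p : Place k F)

lemma place_one : p.v 1 = 0 := by
  have h := p.v_mul 1 1 one_ne_zero one_ne_zero
  rw [one_mul] at h; omega

lemma place_neg_one : p.v (-1) = 0 := by
  have h := p.v_mul (-1) (-1) (neg_ne_zero.mpr one_ne_zero) (neg_ne_zero.mpr one_ne_zero)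
  rw [neg_mul_neg, one_mul, place_one] at h; omega

lemma place_neg (x : F) (hx : x ≠ 0) : p.v (-x) = p.v x := by
  have h : -x = -1 * x := by ring
  rw [h, p.v_mul (-1) x (neg_ne_zero.mpr one_ne_zero) hx, place_neg_one]; omega

lemma place_inv (x : F) (hx : x ≠ 0) : p.v x⁻¹ = - p.v x := by
  have h := p.v_mul x x⁻¹ hx (inv_ne_zero hx)
  rw [mul_inv_cancel₀ hx, place_one] at h; omega

lemma place_pow (x : F) (hx : x ≠ 0) (n : ℕ) : p.v (x ^ n) = n * p.v x := by
  induction n with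
  | zero => simpa using place_one p
  | succ m ih =>
    rw [pow_succ, p.v_mul _ x (pow_ne_zero m hx) hx, ih]
    push_cast; ring

lemma place_add_of_lt (x y : F) (hx : x ≠ 0) (hy : y ≠ 0) (hlt : p.v x < p.v y) :
    x + y ≠ 0 ∧ p.v (x + y) = p.v x := by
  have hne : x + y ≠ 0 := by
    intro h
    have hyx : y = -x := (neg_eq_of_add_eq_zero_right h).symm
    rw [hyx, place_neg p x hx] at hlt; omega
  refine ⟨hne, ?_⟩
  have h1 := p.v_add x y hx hy hne
  have hxy : (x + y) + (-y) = x := by ring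
  have h3 := p.v_add (x + y) (-y) hne (neg_ne_zero.mpr hy) (by rw [hxy]; exact hx)
  rw [hxy, place_neg p y hy] at h3
  omega

end PlaceHelpers

lemma key_lemma {k L K : Type*} [Field k] [Field L] [Field K]
    [Algebra k L] [Algebra k K] [Algebra L K]
    (v : Place k K) (w : Place k L)
    (hvw : Induces v w) (hKL : ExtPseudoTameAt v w)
    (s : L) (hs0 : s ≠ 0) (hodd : Odd (w.v s)) (hpos : 0 ≤ w.v s) :
    ∃ h : K, (h = 0 ∨ 0 ≤ v.v h) ∧ algebraMap L K s + h ^ 4 ≠ 0 ∧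
      Odd (v.v (algebraMap L K s + h ^ 4)) := by
  obtain ⟨e, he1, hev⟩ := hvw
  have hmapne : ∀ x : L, x ≠ 0 → algebraMap L K x ≠ 0 := by
    intro x hx; simpa using hx
  rcases Int.even_or_odd e with he | he
  · -- e even
    obtain ⟨t₀, ht₀0, ht₀1⟩ := w.v_surj 1
    have hodd2 : w.v s % 2 = 1 := Int.odd_iff.mp hodd
    obtain ⟨q, hq⟩ : ∃ q : ℕ, w.v s = 4 * q + 1 ∨ w.v s = 4 * q + 3 :=
      ⟨(w.v s / 4).toNat, by omega⟩
    have hT₀ne : algebraMap L K t₀ ≠ 0 := hmapne t₀ ht₀0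
    have hvT₀ : v.v (algebraMap L K t₀) = e := by rw [hev t₀ ht₀0, ht₀1, mul_one]
    have he2 : e % 2 = 0 := Int.even_iff.mp he
    rcases hq with hq | hq
    · -- w.v s = 4q+1
      have htne : s / t₀ ^ (4 * q) ≠ 0 := div_ne_zero hs0 (pow_ne_zero _ ht₀0)
      have hst : s = s / t₀ ^ (4 * q) * t₀ ^ (4 * q) := by
        field_simp
      have hwt : w.v (s / t₀ ^ (4 * q)) = 1 := by
        have h1 := w.v_mul (s / t₀ ^ (4 * q)) (t₀ ^ (4 * q)) htne (pow_ne_zero _ ht₀0)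
        rw [← hst, place_pow w t₀ ht₀0, ht₀1] at h1
        omega
      obtain ⟨h, hh, hAne, hAodd⟩ := hKL (s / t₀ ^ (4 * q)) htne hwt
      have hhne : h ≠ 0 := by
        intro h0
        rw [h0, (by norm_num : (0:K)^4 = 0), add_zero, hev _ htne, hwt, mul_one,
          Int.odd_iff] at hAodd
        omega
      have hvh : 0 ≤ v.v h := hh.resolve_left hhne
      have hid : algebraMap L K s + (algebraMap L K t₀ ^ q * h) ^ 4 =
          algebraMap L K t₀ ^ (4 * q) * (algebraMap L K (s / t₀ ^ (4 * q)) + h ^ 4) := by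
        nth_rewrite 1 [hst]
        rw [map_mul, map_pow]
        ring
      refine ⟨algebraMap L K t₀ ^ q * h, Or.inr ?_, ?_, ?_⟩
      · rw [v.v_mul _ h (pow_ne_zero _ hT₀ne) hhne, place_pow v _ hT₀ne, hvT₀]
        positivity
      · rw [hid]
        exact mul_ne_zero (pow_ne_zero _ hT₀ne) hAne
      · rw [hid, v.v_mul _ _ (pow_ne_zero _ hT₀ne) hAne, place_pow v _ hT₀ne, hvT₀]
        exact (he.mul_left _).add_odd hAodd
    · -- w.v s = 4q+3
      have hzne : s / t₀ ^ (4 * q + 4) ≠ 0 := div_ne_zero hs0 (pow_ne_zero _ ht₀0)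
      have hsz : s = s / t₀ ^ (4 * q + 4) * t₀ ^ (4 * q + 4) := by field_simp
      have hwz : w.v (s / t₀ ^ (4 * q + 4)) = -1 := by
        have h1 := w.v_mul (s / t₀ ^ (4 * q + 4)) (t₀ ^ (4 * q + 4)) hzne (pow_ne_zero _ ht₀0)
        rw [← hsz, place_pow w t₀ ht₀0, ht₀1] at h1
        push_cast at h1
        omega
      have htne : (s / t₀ ^ (4 * q + 4))⁻¹ ≠ 0 := inv_ne_zero hzne
      have hwt : w.v (s / t₀ ^ (4 * q + 4))⁻¹ = 1 := by
        rw [place_inv w _ hzne, hwz]; ring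
      obtain ⟨g, hg, hAne, hAodd⟩ := hKL _ htne hwt
      have hva : v.v (algebraMap L K (s / t₀ ^ (4 * q + 4))⁻¹) = e := by
        rw [hev _ htne, hwt, mul_one]
      have hane : algebraMap L K (s / t₀ ^ (4 * q + 4))⁻¹ ≠ 0 := hmapne _ htne
      have hgne : g ≠ 0 := by
        intro h0
        rw [h0, (by norm_num : (0:K)^4 = 0), add_zero, hva, Int.odd_iff] at hAodd
        omega
      have hg4ne : g ^ 4 ≠ 0 := pow_ne_zero _ hgne
      have hvg4 : v.v (g ^ 4) = 4 * v.v g := place_pow v g hgne 4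
      have hcancel : 4 * v.v g = e := by
        rcases lt_trichotomy (v.v (g ^ 4)) (v.v (algebraMap L K (s / t₀ ^ (4 * q + 4))⁻¹))
          with hlt | heq | hgt
        · exfalso
          have hsum := place_add_of_lt v (g ^ 4) _ hg4ne hane hlt
          rw [add_comm] at hsum
          rw [hsum.2, hvg4, Int.odd_iff] at hAodd
          omega
        · rw [hvg4, hva] at heq; omega
        · exfalso
          have hsum := place_add_of_lt v _ (g ^ 4) hane hg4ne hgt
          rw [hsum.2, hva, Int.odd_iff] at hAodd
          omega
      have hh₀ne : algebraMap L K t₀ ^ (q + 1) / g ≠ 0 :=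
        div_ne_zero (pow_ne_zero _ hT₀ne) hgne
      have hzK : algebraMap L K (s / t₀ ^ (4 * q + 4)) ≠ 0 := hmapne _ hzne
      have htKinv : algebraMap L K (s / t₀ ^ (4 * q + 4))⁻¹ =
          (algebraMap L K (s / t₀ ^ (4 * q + 4)))⁻¹ := map_inv₀ _ _
      have hid : algebraMap L K s + (algebraMap L K t₀ ^ (q + 1) / g) ^ 4 =
          algebraMap L K t₀ ^ (4 * q + 4) * algebraMap L K (s / t₀ ^ (4 * q + 4)) *
            (algebraMap L K (s / t₀ ^ (4 * q + 4))⁻¹ + g ^ 4) * (g ^ 4)⁻¹ := by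
        have hsK : algebraMap L K s = algebraMap L K (s / t₀ ^ (4 * q + 4)) *
            algebraMap L K t₀ ^ (4 * q + 4) := by
          rw [← map_pow, ← map_mul, ← hsz]
        rw [htKinv, hsK]
        field_simp [hmapne s hs0]
        ring
      refine ⟨algebraMap L K t₀ ^ (q + 1) / g, Or.inr ?_, ?_, ?_⟩
      · rw [div_eq_mul_inv, v.v_mul _ _ (pow_ne_zero _ hT₀ne) (inv_ne_zero hgne),
          place_pow v _ hT₀ne, hvT₀, place_inv v g hgne]
        have h1 : v.v g ≤ e := by omega
        have h2 : e ≤ ((q : ℤ) + 1) * e := by nlinarith [Int.ofNat_nonneg q]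
        push_cast
        omega
      · rw [hid]
        exact mul_ne_zero (mul_ne_zero (mul_ne_zero (pow_ne_zero _ hT₀ne) hzK) hAne)
          (inv_ne_zero hg4ne)
      · rw [hid,
          v.v_mul _ _ (mul_ne_zero (mul_ne_zero (pow_ne_zero _ hT₀ne) hzK) hAne)
            (inv_ne_zero hg4ne),
          v.v_mul _ _ (mul_ne_zero (pow_ne_zero _ hT₀ne) hzK) hAne,
          v.v_mul _ _ (pow_ne_zero _ hT₀ne) hzK,
          place_pow v _ hT₀ne, hvT₀, place_inv v _ hg4ne, hvg4,
          hev _ hzne, hwz]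
        have h4 : Even (-(4 * v.v g)) := by rw [hcancel]; exact he.neg
        exact (((he.mul_left _).add (he.mul_right _)).add_odd hAodd).add_even h4
  · -- e odd
    refine ⟨0, Or.inl rfl, ?_, ?_⟩
    · rw [(by norm_num : (0:K)^4 = 0), add_zero]
      exact hmapne s hs0
    · rw [(by norm_num : (0:K)^4 = 0), add_zero, hev s hs0]
      exact he.mul hodd

/-- Pseudo-tameness is preserved by composition: if `K/L` is pseudo-tame at `v`
and `L/M` is pseudo-tame at the induced place `w`, then `K/M` is pseudo-tame
at `v`. -/
theorem extPseudoTame_comp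
    (k M L K : Type*) [Field k] [IsAlgClosed k] [CharP k 2]
    [Field M] [Field L] [Field K]
    [Algebra k M] [Algebra k L] [Algebra k K]
    [Algebra M L] [Algebra L K] [Algebra M K]
    [IsScalarTower k M L] [IsScalarTower k L K] [IsScalarTower k M K]
    [IsScalarTower M L K]
    [FiniteDimensional L K] [FiniteDimensional M L]
    (hM : IsFunctionFieldOneVar k M) (hL : IsFunctionFieldOneVar k L)
    (hK : IsFunctionFieldOneVar k K)
    (v : Place k K) (w : Place k L) (u : Place k M)
    (hvw : Induces v w) (hvu : Induces v u) (hwu : Induces w u)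
    (hKL : ExtPseudoTameAt v w) (hLM : ExtPseudoTameAt w u) :
    ExtPseudoTameAt v u := by
  intro t ht0 hut
  obtain ⟨f, hf1, hwf⟩ := hwu
  obtain ⟨g, hg, hs0, hsodd⟩ := hLM t ht0 hut
  have hchar : CharP K 2 := charP_of_injective_algebraMap (algebraMap k K).injective 2
  have h4 : ∀ a b : K, (a + b) ^ 4 = a ^ 4 + b ^ 4 := by
    intro a b
    have h := add_pow_char_pow (R := K) (p := 2) (n := 2) (x := a) (y := b)
    norm_num at h
    exact h
  have htL : algebraMap M L t ≠ 0 := by simpa using ht0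
  have hwtL : w.v (algebraMap M L t) = f := by rw [hwf t ht0, hut, mul_one]
  have hwpos : 0 ≤ w.v (algebraMap M L t + g ^ 4) := by
    rcases eq_or_ne g 0 with h0 | h0
    · rw [h0, (by norm_num : (0:L)^4 = 0), add_zero, hwtL]; omega
    · have hg4 : g ^ 4 ≠ 0 := pow_ne_zero _ h0
      have hwg : 0 ≤ w.v g := hg.resolve_left h0
      have hmin := w.v_add _ _ htL hg4 hs0
      rw [hwtL, place_pow w g h0] at hmin
      push_cast at hmin
      omega
  obtain ⟨h₀, hh₀, hne, hodd⟩ := key_lemma v w hvw hKL _ hs0 hsodd hwpos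
  obtain ⟨e, he1, hev⟩ := hvw
  have hEq : algebraMap M K t + (algebraMap L K g + h₀) ^ 4 =
      algebraMap L K (algebraMap M L t + g ^ 4) + h₀ ^ 4 := by
    rw [h4, map_add, map_pow, IsScalarTower.algebraMap_apply M L K]
    ring
  refine ⟨algebraMap L K g + h₀, ?_, ?_, ?_⟩
  · rcases eq_or_ne (algebraMap L K g) 0 with hgK0 | hgK0
    · rw [hgK0, zero_add]
      exact hh₀
    · have hgne : g ≠ 0 := fun h0 => hgK0 (by rw [h0, map_zero])
      have hvgK : 0 ≤ v.v (algebraMap L K g) := by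
        rw [hev g hgne]
        exact mul_nonneg (by omega) (hg.resolve_left hgne)
      rcases eq_or_ne h₀ 0 with hh0 | hh0
      · rw [hh0, add_zero]
        exact Or.inr hvgK
      · have hvh₀ : 0 ≤ v.v h₀ := hh₀.resolve_left hh0
        rcases eq_or_ne (algebraMap L K g + h₀) 0 with hz | hz
        · exact Or.inl hz
        · right
          have := v.v_add _ _ hgK0 hh0 hz
          omega
  · rw [hEq]; exact hne
  · rw [hEq]; exact hodd
end

section
/- Let k be an algebraically closed field of characteristic 2, let L ⊆ K be function fields of one variable over k with K finite over L, let v be a place of K and w the place of L induced by v. If there exist t ∈ L with w(t) = 1 and h ∈ O_v such that v(t + h⁴) is odd, then for every t' ∈ L with w(t') = 1 there exists h' ∈ O_v such that v(t' + h'⁴) is odd. (Pseudo-tameness is independent of the choice of uniformizer.) -/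
/-!
Put `x = t`, `y = h⁴` and `g = x + y`, so `v g = n` is odd. Since `k` is algebraically closed
and `L` is a function field, every element of `O_w` is congruent to a constant modulo `t`
(the residue field of `w` is `k`); iterating, the unit `t' / t` agrees with `p(t)` for some
`p ∈ k[X]` with `p(0) ≠ 0` up to a high power of `t`. As `k` is perfect, `p` is `q` with its
coefficients raised to the fourth power, and in characteristic 2 this gives
`(h q(h))⁴ = R(y)` for `R = X p`. Now `R(x) - R(y) ≡ R'(0) (x - y) = p(0) g` modulo
valuation `n + 1`, because `x - y = g` and both `x` and `y` lie in the maximal ideal (for `y`,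
as otherwise `v g = 0`). Hence
`t' + (h q(h))⁴ ≡ t' - R(y) ≡ R(x) - R(y) ≡ p(0) g`, which has valuation `n`.
-/

open Polynomial

namespace Place

variable {k F : Type*} [Field k] [Field F] [Algebra k F] (P : Place k F)

theorem v_one : P.v 1 = 0 := by
  simpa using (P.v_mul 1 1 one_ne_zero one_ne_zero).symm

theorem v_pow {x : F} (hx : x ≠ 0) (n : ℕ) : P.v (x ^ n) = n * P.v x := by
  induction n with
  | zero => simpa using P.v_one
  | succ n ih => rw [pow_succ, P.v_mul _ _ (pow_ne_zero _ hx) hx, ih]; push_cast; ring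

theorem v_div {x y : F} (hx : x ≠ 0) (hy : y ≠ 0) : P.v (x / y) = P.v x - P.v y := by
  have h := P.v_mul (x / y) y (div_ne_zero hx hy) hy
  rw [div_mul_cancel₀ x hy] at h
  omega

theorem v_neg {x : F} (hx : x ≠ 0) : P.v (-x) = P.v x := by
  have h := P.v_mul (-x) (-x) (neg_ne_zero.2 hx) (neg_ne_zero.2 hx)
  rw [neg_mul_neg, P.v_mul x x hx hx] at h
  omega

theorem v_add_eq_of_lt {x y : F} (hx : x ≠ 0) (hy : y ≠ 0) (hlt : P.v x < P.v y) :
    x + y ≠ 0 ∧ P.v (x + y) = P.v x := by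
  have hxy : x + y ≠ 0 := by
    rintro h
    rw [eq_neg_of_add_eq_zero_right h, P.v_neg hx] at hlt
    exact lt_irrefl _ hlt
  refine ⟨hxy, le_antisymm ?_ (min_eq_left hlt.le ▸ P.v_add x y hx hy hxy)⟩
  by_contra! hgt
  have h := P.v_add (x + y) (-y) hxy (neg_ne_zero.2 hy) (by simpa using hx)
  rw [add_neg_cancel_right, P.v_neg hy] at h
  omega

def ValGE (b : ℤ) (x : F) : Prop := x = 0 ∨ b ≤ P.v x

def unitSubmonoid : Submonoid F where
  carrier := {x | x ≠ 0 ∧ P.v x = 0}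
  one_mem' := ⟨one_ne_zero, P.v_one⟩
  mul_mem' := fun ⟨hx0, hx⟩ ⟨hy0, hy⟩ =>
    ⟨mul_ne_zero hx0 hy0, by rw [P.v_mul _ _ hx0 hy0, hx, hy, add_zero]⟩

variable {P}

theorem valGE_zero (b : ℤ) : P.ValGE b 0 := Or.inl rfl

theorem valGE_algebraMap (c : k) : P.ValGE 0 (algebraMap k F c) := by
  by_cases hc : c = 0
  · simp [hc, valGE_zero]
  · exact Or.inr (P.v_const c hc).ge

theorem ValGE.of_ne_zero {b : ℤ} {x : F} (h : P.ValGE b x) (hx : x ≠ 0) : b ≤ P.v x :=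
  h.resolve_left hx

theorem ValGE.mono {b c : ℤ} {x : F} (h : P.ValGE b x) (hcb : c ≤ b) : P.ValGE c x :=
  h.imp_right hcb.trans

theorem ValGE.neg {b : ℤ} {x : F} (h : P.ValGE b x) : P.ValGE b (-x) := by
  rcases eq_or_ne x 0 with rfl | hx
  · simp [valGE_zero]
  · exact Or.inr (P.v_neg hx ▸ h.of_ne_zero hx)

theorem ValGE.add {b : ℤ} {x y : F} (hx : P.ValGE b x) (hy : P.ValGE b y) :
    P.ValGE b (x + y) := by
  rcases eq_or_ne x 0 with rfl | hx0
  · simpa using hy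
  rcases eq_or_ne y 0 with rfl | hy0
  · simpa using hx
  rcases eq_or_ne (x + y) 0 with h | h
  · exact Or.inl h
  · exact Or.inr ((le_min (hx.of_ne_zero hx0) (hy.of_ne_zero hy0)).trans (P.v_add x y hx0 hy0 h))

theorem ValGE.sub {b : ℤ} {x y : F} (hx : P.ValGE b x) (hy : P.ValGE b y) :
    P.ValGE b (x - y) :=
  sub_eq_add_neg x y ▸ hx.add hy.neg

theorem ValGE.mul {b c : ℤ} {x y : F} (hx : P.ValGE b x) (hy : P.ValGE c y) :
    P.ValGE (b + c) (x * y) := by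
  rcases eq_or_ne x 0 with rfl | hx0
  · simp [valGE_zero]
  rcases eq_or_ne y 0 with rfl | hy0
  · simp [valGE_zero]
  rw [ValGE, P.v_mul x y hx0 hy0]
  exact Or.inr (add_le_add (hx.of_ne_zero hx0) (hy.of_ne_zero hy0))

theorem ValGE.pow {b : ℤ} {x : F} (hx : P.ValGE b x) (n : ℕ) : P.ValGE (n * b) (x ^ n) := by
  induction n with
  | zero => exact Or.inr (by simp [P.v_one])
  | succ n ih => simpa [pow_succ, add_mul] using ih.mul hx

theorem ValGE.sum {b : ℤ} {ι : Type*} {s : Finset ι} {f : ι → F}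
    (hf : ∀ i ∈ s, P.ValGE b (f i)) : P.ValGE b (∑ i ∈ s, f i) := by
  classical
  induction s using Finset.induction_on with
  | empty => exact valGE_zero b
  | insert i s hi ih =>
    rw [Finset.sum_insert hi]
    exact (hf i (s.mem_insert_self i)).add (ih fun j hj => hf j (Finset.mem_insert_of_mem hj))

theorem ValGE.aeval {R : Type*} [CommRing R] [Algebra R F] {x : F} (hx : P.ValGE 0 x)
    {p : R[X]} (hp : ∀ i, P.ValGE 0 (algebraMap R F (p.coeff i))) : P.ValGE 0 (aeval x p) := by
  rw [aeval_eq_sum_range]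
  refine ValGE.sum fun i _ => ?_
  simpa [Algebra.smul_def] using (hp i).mul (hx.pow i)

theorem valGE_div_pow {t x : F} (ht : t ≠ 0) (hvt : P.v t = 1) {n : ℕ}
    (hx : P.ValGE n x) : P.ValGE 0 (x / t ^ n) := by
  rcases eq_or_ne x 0 with rfl | hx0
  · simp [valGE_zero]
  · rw [ValGE, P.v_div hx0 (pow_ne_zero n ht), P.v_pow ht, hvt]
    exact Or.inr (by linarith [hx.of_ne_zero hx0])

theorem v_add_of_valGE {x y : F} (hx : x ≠ 0) (hy : P.ValGE (P.v x + 1) y) :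
    x + y ≠ 0 ∧ P.v (x + y) = P.v x := by
  rcases eq_or_ne y 0 with rfl | hy0
  · simpa using hx
  · exact P.v_add_eq_of_lt hx hy0 (by linarith [hy.of_ne_zero hy0])

theorem mem_unitSubmonoid_of_not_valGE_one {x : F} (hx : P.ValGE 0 x) (hx1 : ¬P.ValGE 1 x) :
    x ∈ P.unitSubmonoid := by
  simp only [ValGE, not_or] at hx1
  exact ⟨hx1.1, le_antisymm (by omega) (hx.of_ne_zero hx1.1)⟩

theorem algebraMap_mem_unitSubmonoid {c : k} (hc : c ≠ 0) :
    algebraMap k F c ∈ P.unitSubmonoid :=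
  ⟨(FaithfulSMul.algebraMap_injective k F).ne_iff' (map_zero _) |>.2 hc, P.v_const c hc⟩

theorem aeval_mem_unitSubmonoid [IsAlgClosed k] {a : F}
    (ha : ∀ c : k, a - algebraMap k F c ∈ P.unitSubmonoid) {p : k[X]} (hp : p ≠ 0) :
    aeval a p ∈ P.unitSubmonoid := by
  rw [(IsAlgClosed.splits p).eq_prod_roots, map_mul, aeval_C, map_multiset_prod,
    Multiset.map_map]
  refine mul_mem (algebraMap_mem_unitSubmonoid (leadingCoeff_ne_zero.2 hp))
    (multiset_prod_mem _ fun x hx => ?_)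
  obtain ⟨r, -, rfl⟩ := Multiset.mem_map.1 hx
  simpa using ha r

theorem ValGE.aeval_of_coeff_zero {t : F} (ht : P.ValGE 1 t) {p : k[X]} (hp : p.coeff 0 = 0) :
    P.ValGE 1 (Polynomial.aeval t p) := by
  rw [← X_mul_divX_add p, hp]
  simpa using ht.mul ((ht.mono zero_le_one).aeval fun i => valGE_algebraMap _)

theorem coeff_zero_ne_zero_of_valGE_one_sub_aeval {t a : F} (ht : P.ValGE 1 t)
    (ha : a ∈ P.unitSubmonoid) {p : k[X]} (hp : P.ValGE 1 (a - Polynomial.aeval t p)) :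
    p.coeff 0 ≠ 0 := by
  intro h0
  have ha1 := hp.add (ht.aeval_of_coeff_zero h0)
  rw [sub_add_cancel] at ha1
  have := ha1.of_ne_zero ha.1
  rw [ha.2] at this
  omega

theorem ValGE.aeval_sub_aeval_sub_coeff_one_mul {x y : F} (hx : P.ValGE 1 x)
    (hy : P.ValGE 1 y) {n : ℤ} (hxy : P.ValGE n (x - y)) (p : k[X]) :
    P.ValGE (n + 1) (Polynomial.aeval x p - Polynomial.aeval y p -
      algebraMap k F (p.coeff 1) * (x - y)) := by
  induction p using Polynomial.induction_on' with
  | add p q hp hq =>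
    convert hp.add hq using 1
    simp only [map_add, coeff_add]
    ring
  | monomial j c =>
    simp only [aeval_monomial, coeff_monomial]
    rcases j with _ | _ | j
    · simp [valGE_zero]
    · simpa [mul_sub] using (valGE_zero (n + 1) : P.ValGE (n + 1) 0)
    rw [if_neg (by omega), map_zero, zero_mul, sub_zero, ← mul_sub, ← geom_sum₂_mul]
    have hsum : P.ValGE 1 (∑ i ∈ Finset.range (j + 2), x ^ i * y ^ (j + 2 - 1 - i)) := by
      refine ValGE.sum fun i hi => ((hx.pow i).mul (hy.pow _)).mono ?_
      have := Finset.mem_range.1 hi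
      push_cast [Nat.sub_sub, Nat.cast_sub (by omega : 1 + i ≤ j + 2)]
      omega
    simpa [add_comm n] using (valGE_algebraMap c).mul (hsum.mul hxy)

theorem ValGE.map_algebraMap {L : Type*} [Field L] [Algebra k L] [Algebra L F] {w : Place k L}
    {e : ℤ} (he : 0 ≤ e) (hvw : ∀ x : L, x ≠ 0 → P.v (algebraMap L F x) = e * w.v x)
    {b : ℤ} {x : L} (hx : w.ValGE b x) : P.ValGE (e * b) (algebraMap L F x) := by
  rcases eq_or_ne x 0 with rfl | hx0
  · simp [valGE_zero]
  · exact Or.inr (by rw [hvw x hx0]; exact mul_le_mul_of_nonneg_left (hx.of_ne_zero hx0) he)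

theorem valGE_one_of_odd_v_add {x y : F} (hx : P.ValGE 1 x) (hy : P.ValGE 0 y)
    (hodd : Odd (P.v (x + y))) : P.ValGE 1 y := by
  by_contra hy1
  obtain ⟨hy0, hvy⟩ := mem_unitSubmonoid_of_not_valGE_one hy hy1
  rw [add_comm, (P.v_add_of_valGE hy0 (by rwa [hvy])).2, hvy] at hodd
  exact Int.not_odd_zero hodd

end Place

theorem IsFunctionFieldOneVar.isAlgebraic_adjoin {k L : Type*} [Field k] [Field L] [Algebra k L]
    (hL : IsFunctionFieldOneVar k L) {u : L} (hu : Transcendental k u) :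
    Algebra.IsAlgebraic (IntermediateField.adjoin k ({u} : Set L)) L := by
  obtain ⟨x, -, hfin⟩ := hL
  have hx : Algebra.IsAlgebraic (Algebra.adjoin k ({x} : Set L)) L := by
    open IntermediateField.algebraAdjoinAdjoin in
    exact Algebra.IsAlgebraic.trans _ (IntermediateField.adjoin k ({x} : Set L)) _
  have htrdeg : Algebra.trdeg k L ≤ 1 := by
    simpa using Algebra.IsAlgebraic.trdeg_le_cardinalMk k ({x} : Set L)
  have hbasis : IsTranscendenceBasis k ((↑) : ({u} : Set L) → L) :=
    (algebraicIndependent_unique_type_iff.2 hu).isTranscendenceBasis_of_trdeg_le_of_finite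
      (by simpa using htrdeg)
  have := hbasis.isAlgebraic_field
  rwa [Subtype.range_coe] at this

open Place IntermediateField in
/-- Otherwise every nonzero element of `k(a)` would be a unit at `P`, `k` being algebraically
closed; but the constant term of the minimal polynomial over `k(a)` of an element of valuation
one lies in the maximal ideal. -/
theorem IsFunctionFieldOneVar.exists_valGE_one_sub_algebraMap {k L : Type*} [Field k]
    [IsAlgClosed k] [Field L] [Algebra k L] (hL : IsFunctionFieldOneVar k L) (P : Place k L)
    {a : L} (ha : P.ValGE 0 a) : ∃ c : k, P.ValGE 1 (a - algebraMap k L c) := by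
  by_contra! hres
  have hpoly : ∀ p : k[X], p ≠ 0 → aeval a p ∈ P.unitSubmonoid := fun p hp =>
    aeval_mem_unitSubmonoid
      (fun c => mem_unitSubmonoid_of_not_valGE_one (ha.sub (valGE_algebraMap c)) (hres c)) hp
  have hfield : ∀ f ∈ k⟮a⟯, f ≠ 0 → P.v f = 0 := by
    intro f hf hf0
    obtain ⟨r, s, rfl⟩ := (mem_adjoin_simple_iff k f).1 hf
    have hr : r ≠ 0 := by rintro rfl; simp at hf0
    have hs : s ≠ 0 := by rintro rfl; simp at hf0
    rw [P.v_div (hpoly r hr).1 (hpoly s hs).1, (hpoly r hr).2, (hpoly s hs).2, sub_zero]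
  have htrans : Transcendental k a := fun ⟨p, hp, hpa⟩ => (hpoly p hp).1 hpa
  have := hL.isAlgebraic_adjoin htrans
  obtain ⟨τ, hτ0, hτ⟩ := P.v_surj 1
  set m := minpoly k⟮a⟯ τ
  have hm0 : m.coeff 0 ≠ 0 := minpoly.coeff_zero_ne_zero (Algebra.IsIntegral.isIntegral τ) hτ0
  have hcoeff : ∀ i, P.ValGE 0 (algebraMap k⟮a⟯ L (m.coeff i)) := fun i => by
    rcases eq_or_ne (algebraMap k⟮a⟯ L (m.coeff i)) 0 with h | h
    · exact Or.inl h
    · exact Or.inr (hfield _ (m.coeff i).2 h).ge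
  have hrel : algebraMap k⟮a⟯ L (m.coeff 0) = -(τ * aeval τ m.divX) := by
    have h := congrArg (aeval τ) (X_mul_divX_add m)
    rw [minpoly.aeval, map_add, map_mul, aeval_X, aeval_C] at h
    exact eq_neg_of_add_eq_zero_right h
  have hval : P.ValGE 1 (algebraMap k⟮a⟯ L (m.coeff 0)) := by
    rw [hrel]
    have hτ1 : P.ValGE 1 τ := Or.inr hτ.ge
    refine (hτ1.mul ((hτ1.mono zero_le_one).aeval (p := m.divX) fun i => ?_)).neg
    simpa [coeff_divX] using hcoeff (i + 1)
  have hm0' : algebraMap k⟮a⟯ L (m.coeff 0) ≠ 0 := by simpa using hm0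
  have hv0 : P.v (algebraMap k⟮a⟯ L (m.coeff 0)) = 0 := hfield _ (m.coeff 0).2 hm0'
  have hv1 := hval.of_ne_zero hm0'
  omega

open Place in
theorem IsFunctionFieldOneVar.exists_valGE_sub_aeval {k L : Type*} [Field k] [IsAlgClosed k]
    [Field L] [Algebra k L] (hL : IsFunctionFieldOneVar k L) (P : Place k L) {t : L}
    (ht0 : t ≠ 0) (ht : P.v t = 1) {a : L} (ha : P.ValGE 0 a) (N : ℕ) :
    ∃ p : k[X], P.ValGE N (a - aeval t p) := by
  induction N with
  | zero => exact ⟨0, by simpa using ha⟩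
  | succ N ih =>
    obtain ⟨p, hp⟩ := ih
    obtain ⟨c, hc⟩ := hL.exists_valGE_one_sub_algebraMap P (valGE_div_pow ht0 ht hp)
    refine ⟨p + C c * X ^ N, ?_⟩
    have hdecomp : a - aeval t (p + C c * X ^ N)
        = t ^ N * ((a - aeval t p) / t ^ N - algebraMap k L c) := by
      rw [mul_sub, mul_div_cancel₀ _ (pow_ne_zero N ht0)]
      simp only [map_add, map_mul, aeval_C, map_pow, aeval_X]
      ring
    have ht1 : P.ValGE 1 t := Or.inr ht.ge
    rw [hdecomp]
    simpa using (ht1.pow N).mul hc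

section CharTwo

variable {k F : Type*} [Field k] [Field F] [Algebra k F] [CharP k 2] [CharP F 2]

theorem aeval_pow_four (h : F) (q : k[X]) :
    aeval h q ^ 4 = aeval (h ^ 4) (q.map (iterateFrobenius k 2 2)) := by
  have hcomm : (iterateFrobenius F 2 2).comp (algebraMap k F)
      = (algebraMap k F).comp (iterateFrobenius k 2 2) :=
    RingHom.ext fun c => by simp [iterateFrobenius_def]
  have h4 (z : F) : z ^ 4 = iterateFrobenius F 2 2 z := by norm_num [iterateFrobenius_def]
  rw [h4, h4, aeval_def, hom_eval₂, hcomm, aeval_def, eval₂_map]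

namespace Place

variable {P : Place k F}

theorem exists_odd_v_add_pow_four [PerfectRing k 2] {x h z : F} (hx : P.ValGE 1 x)
    (hh : P.ValGE 0 h) (hne : x + h ^ 4 ≠ 0) (hodd : Odd (P.v (x + h ^ 4))) {p : k[X]}
    (hp0 : p.coeff 0 ≠ 0) (hz : P.ValGE (P.v (x + h ^ 4) + 1) (z - x * aeval x p)) :
    ∃ h' : F, P.ValGE 0 h' ∧ z + h' ^ 4 ≠ 0 ∧ Odd (P.v (z + h' ^ 4)) := by
  obtain ⟨q, hq⟩ := map_surjective _ (bijective_iterateFrobenius k 2 2).2 p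
  set y := h ^ 4
  set c := algebraMap k F (p.coeff 0)
  have hy : P.ValGE 1 y := valGE_one_of_odd_v_add hx (by simpa using hh.pow 4) hodd
  have hcg : c * (x + y) ≠ 0 ∧ P.v (c * (x + y)) = P.v (x + y) := by
    obtain ⟨hc0, hvc⟩ := algebraMap_mem_unitSubmonoid (P := P) hp0
    exact ⟨mul_ne_zero hc0 hne, by rw [P.v_mul _ _ hc0 hne, hvc, zero_add]⟩
  have hsplit : z + (h * aeval h q) ^ 4 = c * (x + y) + ((z - x * aeval x p) +
      (aeval x (X * p) - aeval y (X * p) - c * (x - y))) := by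
    simp only [mul_pow, aeval_pow_four, hq, map_mul, aeval_X]
    linear_combination (y * aeval y p - c * y) * CharTwo.two_eq_zero (R := F)
  have hrest : P.ValGE (P.v (x + y) + 1) ((z - x * aeval x p) +
      (aeval x (X * p) - aeval y (X * p) - c * (x - y))) := by
    have hxy : P.ValGE (P.v (x + y)) (x - y) := Or.inr (by rw [CharTwo.sub_eq_add])
    have htaylor := hx.aeval_sub_aeval_sub_coeff_one_mul hy hxy (X * p)
    have hcoeff : (X * p).coeff 1 = p.coeff 0 := coeff_X_mul p 0
    rw [hcoeff] at htaylor
    exact hz.add htaylor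
  refine ⟨h * aeval h q, by simpa using hh.mul (hh.aeval fun i => valGE_algebraMap _), ?_⟩
  rw [hsplit]
  obtain ⟨hne', hv⟩ := P.v_add_of_valGE hcg.1 (hcg.2 ▸ hrest)
  exact ⟨hne', hv ▸ hcg.2 ▸ hodd⟩

end Place

end CharTwo

open Place in
theorem extPseudoTame_indep_uniformizer_general
    (k L K : Type*) [Field k] [IsAlgClosed k] [CharP k 2]
    [Field L] [Field K]
    [Algebra k L] [Algebra k K] [Algebra L K] [IsScalarTower k L K]
    (hL : IsFunctionFieldOneVar k L)
    (v : Place k K) (w : Place k L) (hvw : Induces v w)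
    (hex : ∃ t : L, t ≠ 0 ∧ w.v t = 1 ∧
      ∃ h : K, (h = 0 ∨ 0 ≤ v.v h) ∧ algebraMap L K t + h ^ 4 ≠ 0 ∧
        Odd (v.v (algebraMap L K t + h ^ 4))) :
    ∀ t' : L, t' ≠ 0 → w.v t' = 1 →
      ∃ h' : K, (h' = 0 ∨ 0 ≤ v.v h') ∧ algebraMap L K t' + h' ^ 4 ≠ 0 ∧
        Odd (v.v (algebraMap L K t' + h' ^ 4)) := by
  have : CharP K 2 := charP_of_injective_algebraMap (algebraMap k K).injective 2
  obtain ⟨e, he, hvw⟩ := hvw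
  obtain ⟨t, ht0, hwt, h, hh, hne, hodd⟩ := hex
  intro t' ht'0 hwt'
  set n := v.v (algebraMap L K t + h ^ 4)
  have ht1 : w.ValGE 1 t := Or.inr hwt.ge
  have hunit : t' / t ∈ w.unitSubmonoid :=
    ⟨div_ne_zero ht'0 ht0, by rw [w.v_div ht'0 ht0, hwt, hwt', sub_self]⟩
  obtain ⟨p, hp⟩ := hL.exists_valGE_sub_aeval w ht0 hwt (Or.inr hunit.2.ge) (n.toNat + 1)
  have hp0 : p.coeff 0 ≠ 0 :=
    coeff_zero_ne_zero_of_valGE_one_sub_aeval ht1 hunit (hp.mono (by omega))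
  have hz : algebraMap L K t' - algebraMap L K t * aeval (algebraMap L K t) p
      = algebraMap L K (t * (t' / t - aeval t p)) := by
    rw [mul_sub, mul_div_cancel₀ _ ht0, map_sub, map_mul, aeval_algebraMap_apply]
  refine exists_odd_v_add_pow_four (Or.inr (by rw [hvw t ht0, hwt]; omega)) hh hne hodd hp0 ?_
  rw [hz]
  refine ((ht1.mul hp).map_algebraMap (by omega) hvw).mono ?_
  have hN : n + 1 ≤ 1 + ((n.toNat + 1 : ℕ) : ℤ) := by
    push_cast
    linarith [Int.self_le_toNat n]
  nlinarith

/-- Pseudo-tameness of a finite extension `K/L` at a place `v` of `K` is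
independent of the choice of uniformizer of the induced place `w` of `L`:
if some uniformizer `t` at `w` admits `h ∈ O_v` with `v (t + h⁴)` odd, then
every uniformizer `t'` at `w` admits such an `h'`. -/
theorem extPseudoTame_indep_uniformizer
    (k L K : Type*) [Field k] [IsAlgClosed k] [CharP k 2]
    [Field L] [Field K]
    [Algebra k L] [Algebra k K] [Algebra L K] [IsScalarTower k L K]
    [FiniteDimensional L K]
    (hL : IsFunctionFieldOneVar k L) (hK : IsFunctionFieldOneVar k K)
    (v : Place k K) (w : Place k L) (hvw : Induces v w)
    (hex : ∃ t : L, t ≠ 0 ∧ w.v t = 1 ∧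
      ∃ h : K, (h = 0 ∨ 0 ≤ v.v h) ∧ algebraMap L K t + h ^ 4 ≠ 0 ∧
        Odd (v.v (algebraMap L K t + h ^ 4))) :
    ∀ t' : L, t' ≠ 0 → w.v t' = 1 →
      ∃ h' : K, (h' = 0 ∨ 0 ≤ v.v h') ∧ algebraMap L K t' + h' ^ 4 ≠ 0 ∧
        Odd (v.v (algebraMap L K t' + h' ^ 4)) :=
  extPseudoTame_indep_uniformizer_general k L K hL v w hvw hex
end

section
/- For all f, g, h ∈ H, the Čech 1-cocycle condition a(f,g) + a(g,h) + a(h,f) ≡ 0 (mod K²) holds. -/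
/-- The set `K² = {x² : x ∈ K}` of squares of `K`. -/
def sqSet (K : Type*) [Field K] : Set K := {x | ∃ y : K, y ^ 2 = x}

/-- `K` is two-dimensional as a vector space over its subfield `K²`:
there is some `g ∉ K²`, and for every such `g` the pair `(1, g)` spans `K`
over `K²`. -/
def TwoDimOverSquares (K : Type*) [Field K] : Prop :=
  (∃ g : K, g ∉ sqSet K) ∧
    ∀ g : K, g ∉ sqSet K → ∀ x : K, ∃ a b : K, x = a ^ 2 + b ^ 2 * g

/-- The quantity `a(f,g) = (f₁²·f₃² + f₂⁴)·g / (f₃⁴·g² + f₁⁴)`, where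
`f = f₀⁴ + f₁⁴·g + f₂⁴·g² + f₃⁴·g³` is the expansion of `f` with respect to `g`
in the basis `{1, g, g², g³}` of `K` over `K⁴`. -/
noncomputable def aOf {K : Type*} [Field K] (g f₁ f₂ f₃ : K) : K :=
  ((f₁ ^ 2 * f₃ ^ 2 + f₂ ^ 4) * g) / (f₃ ^ 4 * g ^ 2 + f₁ ^ 4)

private lemma sq_key {K : Type*} [Field K] {h x y : K} (hh : h ∉ sqSet K)
    (e : x ^ 2 = y ^ 2 * h) : x = 0 ∧ y = 0 := by
  rcases eq_or_ne y 0 with hy | hy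
  · subst hy
    have hx2 : x ^ 2 = 0 := by linear_combination e
    exact ⟨pow_eq_zero_iff (by norm_num : (2:ℕ) ≠ 0) |>.mp hx2, rfl⟩
  · exact absurd ⟨x / y, by
      rw [div_pow, div_eq_iff (pow_ne_zero 2 hy)]
      linear_combination e⟩ hh

set_option maxHeartbeats 2000000 in
/-- **The Čech 1-cocycle condition**: `a(f,g) + a(g,h) + a(h,f) ≡ 0 (mod K²)`. -/
theorem a_cocycle (K : Type*) [Field K] [CharP K 2] (hdim : TwoDimOverSquares K)
    (f g h : K) (hf : f ∉ sqSet K) (hg : g ∉ sqSet K) (hh : h ∉ sqSet K)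
    (p₀ p₁ p₂ p₃ : K) (hp : f = p₀ ^ 4 + p₁ ^ 4 * g + p₂ ^ 4 * g ^ 2 + p₃ ^ 4 * g ^ 3)
    (q₀ q₁ q₂ q₃ : K) (hq : g = q₀ ^ 4 + q₁ ^ 4 * h + q₂ ^ 4 * h ^ 2 + q₃ ^ 4 * h ^ 3)
    (r₀ r₁ r₂ r₃ : K) (hr : h = r₀ ^ 4 + r₁ ^ 4 * f + r₂ ^ 4 * f ^ 2 + r₃ ^ 4 * f ^ 3) :
    aOf g p₁ p₂ p₃ + aOf h q₁ q₂ q₃ + aOf f r₁ r₂ r₃ ∈ sqSet K := by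
  have htwo : (2 : K) = 0 := by
    have h2 := CharP.cast_eq_zero K 2
    exact_mod_cast h2
  obtain ⟨C, hC⟩ : ∃ x : K, x = q₀ ^ 2 + q₂ ^ 2 * h := ⟨_, rfl⟩
  obtain ⟨D, hD⟩ : ∃ x : K, x = q₁ ^ 2 + q₃ ^ 2 * h := ⟨_, rfl⟩
  obtain ⟨A0, hA0⟩ : ∃ x : K, x = p₀ + p₂ * C := ⟨_, rfl⟩
  obtain ⟨a1, ha1⟩ : ∃ x : K, x = p₂ * D := ⟨_, rfl⟩
  obtain ⟨b0, hb0⟩ : ∃ x : K, x = p₁ + p₃ * C := ⟨_, rfl⟩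
  obtain ⟨b1, hb1⟩ : ∃ x : K, x = p₃ * D := ⟨_, rfl⟩
  obtain ⟨m0, hm0⟩ : ∃ x : K, x = A0 + b0 * q₀ + b1 * q₂ * h := ⟨_, rfl⟩
  obtain ⟨m1, hm1⟩ : ∃ x : K, x = a1 + b0 * q₂ + b1 * q₀ := ⟨_, rfl⟩
  obtain ⟨n0, hn0⟩ : ∃ x : K, x = b0 * q₁ + b1 * q₃ * h := ⟨_, rfl⟩
  obtain ⟨n1, hn1⟩ : ∃ x : K, x = b0 * q₃ + b1 * q₁ := ⟨_, rfl⟩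
  obtain ⟨M, hM⟩ : ∃ x : K, x = m0 ^ 2 + m1 ^ 2 * h := ⟨_, rfl⟩
  obtain ⟨N, hN⟩ : ∃ x : K, x = n0 ^ 2 + n1 ^ 2 * h := ⟨_, rfl⟩
  obtain ⟨A, hA⟩ : ∃ x : K, x = p₀ ^ 2 + p₂ ^ 2 * g := ⟨_, rfl⟩
  obtain ⟨B, hB⟩ : ∃ x : K, x = p₁ ^ 2 + p₃ ^ 2 * g := ⟨_, rfl⟩
  obtain ⟨E, hE⟩ : ∃ x : K, x = r₀ ^ 2 + r₂ ^ 2 * f := ⟨_, rfl⟩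
  obtain ⟨F, hF⟩ : ∃ x : K, x = r₁ ^ 2 + r₃ ^ 2 * f := ⟨_, rfl⟩
  obtain ⟨phi0, hphi0⟩ : ∃ x : K, x = r₁ + r₃ * M := ⟨_, rfl⟩
  obtain ⟨phi1, hphi1⟩ : ∃ x : K, x = r₃ * N := ⟨_, rfl⟩
  obtain ⟨e0, he0⟩ : ∃ x : K, x = r₀ + r₂ * M := ⟨_, rfl⟩
  obtain ⟨e1, he1⟩ : ∃ x : K, x = r₂ * N := ⟨_, rfl⟩
  obtain ⟨P, hP⟩ : ∃ x : K, x = p₁ * p₃ + p₂ ^ 2 := ⟨_, rfl⟩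
  obtain ⟨Q, hQ⟩ : ∃ x : K, x = q₁ * q₃ + q₂ ^ 2 := ⟨_, rfl⟩
  obtain ⟨R, hR⟩ : ∃ x : K, x = r₁ * r₃ + r₂ ^ 2 := ⟨_, rfl⟩
  have repg : g = C ^ 2 + D ^ 2 * h := by
    linear_combination ((1)) * hq + ((-1)*C + (-1)*q₂^2*h + (-1)*q₀^2) * hC + ((-1)*h*D + (-1)*q₃^2*h^2 + (-1)*q₁^2*h) * hD + ((-1)*q₁^2*q₃^2*h^2 + (-1)*q₀^2*q₂^2*h) * htwo
  have repA : A = A0 ^ 2 + a1 ^ 2 * h := by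
    linear_combination (p₂^2) * repg + ((1)) * hA + ((-1)*A0 + (-1)*p₂*C + (-1)*p₀) * hA0 + ((-1)*h*a1 + (-1)*p₂*h*D) * ha1 + ((-2)*p₀*p₂) * hC + ((-1)*p₀*p₂*q₂^2*h + (-1)*p₀*p₂*q₀^2) * htwo
  have repB : B = b0 ^ 2 + b1 ^ 2 * h := by
    linear_combination (p₃^2) * repg + ((1)) * hB + ((-1)*b0 + (-1)*p₃*C + (-1)*p₁) * hb0 + ((-1)*h*b1 + (-1)*p₃*h*D) * hb1 + ((-2)*p₁*p₃) * hC + ((-1)*p₁*p₃*q₂^2*h + (-1)*p₁*p₃*q₀^2) * htwo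
  have repf1 : f = A ^ 2 + B ^ 2 * g := by
    linear_combination ((1)) * hp + ((-1)*A + (-1)*p₂^2*g + (-1)*p₀^2) * hA + ((-1)*g*B + (-1)*p₃^2*g^2 + (-1)*p₁^2*g) * hB + ((-1)*p₁^2*p₃^2*g^2 + (-1)*p₀^2*p₂^2*g) * htwo
  have hAM : A + B * C = M := by
    linear_combination ((1)) * repA + (C) * repB + ((-1)) * hM + ((-1)*m0 + (-1)*A0 + (-1)*q₂*h*b1 + (-1)*q₀*b0) * hm0 + ((-1)*h*m1 + (-1)*h*a1 + (-1)*q₂*h*b0 + (-1)*q₀*h*b1) * hm1 + ((-2)*q₂*h*b1 + (-2)*q₀*b0) * hA0 + ((-2)*q₂*h*b0 + (-2)*q₀*h*b1) * ha1 + (C*b0 + (-1)*q₂^2*h*b0 + (-4)*q₀*q₂*h*b1 + (-1)*q₀^2*b0 + p₃*C^2 + (-1)*p₃*q₂^2*h*C + (-1)*p₃*q₀^2*C + (-2)*p₂*q₂*h*D + (-2)*p₂*q₀*C + p₁*C + (-1)*p₁*q₂^2*h + (-1)*p₁*q₀^2 + (-2)*p₀*q₀) * hb0 + (h*C*b1 +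 (-1)*q₂^2*h^2*b1 + (-1)*q₀^2*h*b1 + p₃*h*C*D + (-1)*p₃*q₂^2*h^2*D + (-4)*p₃*q₀*q₂*h*C + (-1)*p₃*q₀^2*h*D + (-2)*p₂*q₂*h*C + (-2)*p₂*q₀*h*D + (-4)*p₁*q₀*q₂*h + (-2)*p₀*q₂*h) * hb1 + (p₃^2*C^2 + p₃^2*h*D^2 + (-4)*p₃^2*q₀*q₂*h*D + (-4)*p₂*p₃*q₂*h*D + (-2)*p₂*p₃*q₀*C + (-2)*p₂*p₃*q₀*q₂^2*h + (-2)*p₂*p₃*q₀^3 + (2)*p₁*p₃*C + (-2)*p₁*p₂*q₀ + p₁^2 + (-2)*p₀*p₃*q₀) * hC + ((-4)*p₃^2*q₀*q₂^3*h^2 + (-4)*p₃^2*q₀^3*q₂*h + (-4)*p₂*p₃*q₂^3*h^2 + (-2)*p₂*p₃*q₀*h*D + (-2)*p₂*p₃*q₀*q₃^2*h^2 + (-2)*p₂*p₃*q₀*q₁^2*h + (-4)*p₂*p₃*q₀^2*q₂*h + (-4)*p₁*p₃*q₀*q₂*h + (-2)*p₁*p₂*q₂*h + (-2)*p₀*p₃*q₂*h)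 * hD + ((-2)*p₃^2*q₀*q₂^3*q₃^2*h^3 + (-2)*p₃^2*q₀*q₁^2*q₂^3*h^2 + (-2)*p₃^2*q₀^3*q₂*q₃^2*h^2 + (-2)*p₃^2*q₀^3*q₁^2*q₂*h + (-2)*p₂*p₃*q₂^3*q₃^2*h^3 + (-2)*p₂*p₃*q₁^2*q₂^3*h^2 + (-1)*p₂*p₃*q₀*q₃^4*h^3 + (-1)*p₂*p₃*q₀*q₂^4*h^2 + (-2)*p₂*p₃*q₀*q₁^2*q₃^2*h^2 + (-1)*p₂*p₃*q₀*q₁^4*h + (-2)*p₂*p₃*q₀^2*q₂*q₃^2*h^2 + (-2)*p₂*p₃*q₀^2*q₁^2*q₂*h + (-2)*p₂*p₃*q₀^3*q₂^2*h + (-1)*p₂*p₃*q₀^5 + (-2)*p₁*p₃*q₀*q₂*q₃^2*h^2 + (-2)*p₁*p₃*q₀*q₁^2*q₂*h + (-1)*p₁*p₂*q₂*q₃^2*h^2 + (-1)*p₁*p₂*q₁^2*q₂*h + (-1)*p₁*p₂*q₀*q₂^2*h + (-1)*p₁*p₂*q₀^3 + (-1)*p₀*p₃*q₂*q₃^2*h^2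 + (-1)*p₀*p₃*q₁^2*q₂*h + (-1)*p₀*p₃*q₀*q₂^2*h + (-1)*p₀*p₃*q₀^3 + (-1)*p₀*p₁*q₀) * htwo
  have repN : B * D = N := by
    linear_combination (D) * repB + ((-1)) * hN + ((-1)*n0 + (-1)*q₃*h*b1 + (-1)*q₁*b0) * hn0 + ((-1)*h*n1 + (-1)*q₃*h*b0 + (-1)*q₁*h*b1) * hn1 + (D*b0 + (-1)*q₃^2*h*b0 + (-4)*q₁*q₃*h*b1 + (-1)*q₁^2*b0 + p₃*C*D + (-1)*p₃*q₃^2*h*C + (-1)*p₃*q₁^2*C + p₁*D + (-1)*p₁*q₃^2*h + (-1)*p₁*q₁^2) * hb0 + (h*D*b1 + (-1)*q₃^2*h^2*b1 + (-1)*q₁^2*h*b1 + p₃*h*D^2 + (-1)*p₃*q₃^2*h^2*D + (-4)*p₃*q₁*q₃*h*C + (-1)*p₃*q₁^2*h*D + (-4)*p₁*q₁*q₃*h) * hb1 + (p₃^2*C*D + (-1)*p₃^2*q₃^2*h*C + p₃^2*q₂^2*h*D + (-1)*p₃^2*q₂^2*q₃^2*h^2 + (-4)*p₃^2*q₁*q₃*h*D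 + (-1)*p₃^2*q₁^2*C + (-1)*p₃^2*q₁^2*q₂^2*h + p₃^2*q₀^2*D + (-1)*p₃^2*q₀^2*q₃^2*h + (-1)*p₃^2*q₀^2*q₁^2 + (2)*p₁*p₃*D + (-2)*p₁*p₃*q₃^2*h + (-2)*p₁*p₃*q₁^2) * hC + (p₃^2*h*D^2 + p₃^2*q₂^4*h^2 + (-4)*p₃^2*q₁*q₂^2*q₃*h^2 + (2)*p₃^2*q₀^2*q₂^2*h + (-4)*p₃^2*q₀^2*q₁*q₃*h + p₃^2*q₀^4 + (2)*p₁*p₃*q₂^2*h + (-4)*p₁*p₃*q₁*q₃*h + (2)*p₁*p₃*q₀^2 + p₁^2) * hD + ((-2)*p₃^2*q₁*q₂^2*q₃^3*h^3 + (-2)*p₃^2*q₁^3*q₂^2*q₃*h^2 + (-2)*p₃^2*q₀^2*q₁*q₃^3*h^2 + (-2)*p₃^2*q₀^2*q₁^3*q₃*h + (-2)*p₁*p₃*q₁*q₃^3*h^2 + (-2)*p₁*p₃*q₁^3*q₃*h) * htwo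
  have repf : f = M ^ 2 + N ^ 2 * h := by
    linear_combination ((1)) * repf1 + (B^2) * repg + (A + M + C*B) * hAM + (h*N + h*D*B) * repN + ((-1)*C*A*B) * htwo
  have repF : F = phi0 ^ 2 + phi1 ^ 2 * h := by
    linear_combination (r₃^2) * repf + ((1)) * hF + ((-1)*phi0 + (-1)*r₃*M + (-1)*r₁) * hphi0 + ((-1)*h*phi1 + (-1)*r₃*h*N) * hphi1 + ((-1)*r₁*r₃*M) * htwo
  have repE : E = e0 ^ 2 + e1 ^ 2 * h := by
    linear_combination (r₂^2) * repf + ((1)) * hE + ((-1)*e0 + (-1)*r₂*M + (-1)*r₀) * he0 + ((-1)*h*e1 + (-1)*r₂*h*N) * he1 + ((-1)*r₀*r₂*M) * htwo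
  have hB0 : B ≠ 0 := by
    intro h0
    rcases eq_or_ne p₃ 0 with h3 | h3
    · have hz : p₁ ^ 2 = 0 := by linear_combination h0 - hB - p₃ * g * h3
      have hz1 : p₁ = 0 := pow_eq_zero_iff (by norm_num : (2:ℕ) ≠ 0) |>.mp hz
      exact hf ⟨p₀ ^ 2 + p₂ ^ 2 * g, by
        linear_combination -hp - p₁ ^ 3 * g * hz1 - p₃ ^ 3 * g ^ 3 * h3 + p₀ ^ 2 * p₂ ^ 2 * g * htwo⟩
    · exact hg ⟨p₁ / p₃, by
        rw [div_pow, div_eq_iff (pow_ne_zero 2 h3)]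
        linear_combination h0 - hB - p₃ ^ 2 * g * htwo⟩
  have hD0 : D ≠ 0 := by
    intro h0
    rcases eq_or_ne q₃ 0 with h3 | h3
    · have hz : q₁ ^ 2 = 0 := by linear_combination h0 - hD - q₃ * h * h3
      have hz1 : q₁ = 0 := pow_eq_zero_iff (by norm_num : (2:ℕ) ≠ 0) |>.mp hz
      exact hg ⟨q₀ ^ 2 + q₂ ^ 2 * h, by
        linear_combination -hq - q₁ ^ 3 * h * hz1 - q₃ ^ 3 * h ^ 3 * h3 + q₀ ^ 2 * q₂ ^ 2 * h * htwo⟩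
    · exact hh ⟨q₁ / q₃, by
        rw [div_pow, div_eq_iff (pow_ne_zero 2 h3)]
        linear_combination h0 - hD - q₃ ^ 2 * h * htwo⟩
  have hF0 : F ≠ 0 := by
    intro h0
    rcases eq_or_ne r₃ 0 with h3 | h3
    · have hz : r₁ ^ 2 = 0 := by linear_combination h0 - hF - r₃ * f * h3
      have hz1 : r₁ = 0 := pow_eq_zero_iff (by norm_num : (2:ℕ) ≠ 0) |>.mp hz
      exact hh ⟨r₀ ^ 2 + r₂ ^ 2 * f, by
        linear_combination -hr - r₁ ^ 3 * f * hz1 - r₃ ^ 3 * f ^ 3 * h3 + r₀ ^ 2 * r₂ ^ 2 * f * htwo⟩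
    · exact hf ⟨r₁ / r₃, by
        rw [div_pow, div_eq_iff (pow_ne_zero 2 h3)]
        linear_combination h0 - hF - r₃ ^ 2 * f * htwo⟩
  have hN0 : N ≠ 0 := by
    rw [← repN]; exact mul_ne_zero hB0 hD0
  have h1 : (E + F * M) ^ 2 = (1 + F * N) ^ 2 * h := by
    linear_combination ((-1)) * hr + (E + (2)*M*F + r₂^2*f + r₀^2) * hE + (M^2*F + (-2)*h*N + (-1)*h*N^2*F + r₃^2*f*M^2 + (-1)*r₃^2*h*f*N^2 + (2)*r₂^2*f*M + r₁^2*M^2 + (-1)*r₁^2*h*N^2 + (2)*r₀^2*M) * hF + ((-2)*r₃^2*h*N + (-1)*r₃^4*f^2 + (-2)*r₃^4*h*M^2*N^2 + (-2)*r₃^4*h*f*N^2 + (-2)*r₃^4*h^2*N^4 + (2)*r₂^2*r₃^2*M^3 + (2)*r₂^2*r₃^2*f*M + (2)*r₂^2*r₃^2*h*M*N^2 + (2)*r₁^2*r₃^2*M^2 + (-2)*r₁^2*r₃^2*h*N^2 + (2)*r₁^2*r₂^2*M + (-1)*r₁^4 + (2)*r₀^2*r₃^2*M + (2)*r₀^2*r₂^2)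 * repf + ((-1)*r₃^2*h*M^2*N + (-1)*r₃^2*h^2*N^3 + (-1)*r₃^4*h*M^4*N^2 + (-2)*r₃^4*h^2*M^2*N^4 + (-1)*r₃^4*h^3*N^6 + r₂^2*r₃^2*M^5 + (2)*r₂^2*r₃^2*h*M^3*N^2 + r₂^2*r₃^2*h^2*M*N^4 + (-1)*r₁^2*h*N + r₁^2*r₃^2*M^4 + (-1)*r₁^2*r₃^2*h^2*N^4 + r₁^2*r₂^2*M^3 + r₁^2*r₂^2*h*M*N^2 + (-1)*r₁^4*h*N^2 + r₀^2*r₃^2*M^3 + r₀^2*r₃^2*h*M*N^2 + r₀^2*r₂^2*M^2 + r₀^2*r₂^2*h*N^2 + r₀^2*r₁^2*M) * htwo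
  obtain ⟨hEFM, hFN1⟩ := sq_key hh h1
  have hFN : F * N = 1 := by linear_combination hFN1 - htwo
  have h2 : (n0 * phi0 + n1 * phi1 * h + 1) ^ 2 = (n0 * phi1 + n1 * phi0) ^ 2 * h := by
    linear_combination ((-1)) * hFN + (N) * repF + (phi0^2 + h*phi1^2) * hN + (n0*phi0 + n0^2*phi0^2 + h*n1*phi1 + h^2*n1^2*phi1^2) * htwo
  obtain ⟨-, hS1⟩ := sq_key hh h2
  have h3 : (e0 + phi0 * m0 + phi1 * m1 * h) ^ 2 = (e1 + phi0 * m1 + phi1 * m0) ^ 2 * h := by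
    linear_combination ((-1)) * hEFM + ((1)) * repE + (M) * repF + (phi0^2 + h*phi1^2) * hM + (e0^2 + m0*phi0*e0 + m0^2*phi0^2 + h*m1*phi1*e0 + (-1)*h*m1*phi0*e1 + (-1)*h*m0*phi1*e1 + h^2*m1^2*phi1^2) * htwo
  obtain ⟨-, hS4⟩ := sq_key hh h3
  have e1L : P * D ^ 2 = D * (b0 * b1) + C * b1 ^ 2 + a1 ^ 2 := by
    linear_combination (D^2) * hP + ((-1)*D*b1) * hb0 + ((-1)*C*b1 + (-2)*p₃*C*D + (-1)*p₁*D) * hb1 + ((-1)*a1 + (-1)*p₂*D) * ha1 + ((-1)*p₃^2*C*D^2) * htwo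
  have e2L : R * N ^ 2 = N * (phi0 * phi1) + M * phi1 ^ 2 + e1 ^ 2 := by
    linear_combination (N^2) * hR + ((-1)*N*phi1) * hphi0 + ((-1)*M*phi1 + (-2)*r₃*M*N + (-1)*r₁*N) * hphi1 + ((-1)*e1 + (-1)*r₂*N) * he1 + ((-1)*r₃^2*M*N^2) * htwo
  have w1 : N * (phi0 * phi1) + F * (n0 * n1) = 0 := by
    linear_combination (n0*phi0 + h*n1*phi1) * hS1 + (n0*n1) * repF + (phi0*phi1) * hN
  have w4 : n0 * n1 = q₁ * q₃ * B + b0 * b1 * D := by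
    linear_combination (n1) * hn0 + (q₃*h*b1 + q₁*b0) * hn1 + ((-1)*q₁*q₃) * repB + ((-1)*b0*b1) * hD
  have m1sq : m1 ^ 2 = a1 ^ 2 + b0 ^ 2 * q₂ ^ 2 + b1 ^ 2 * q₀ ^ 2 := by
    linear_combination (m1 + a1 + q₂*b0 + q₀*b1) * hm1 + (q₂*a1*b0 + q₀*a1*b1 + q₀*q₂*b0*b1) * htwo
  have hX : P * D ^ 3 + Q * N + R * N ^ 3 * D = 0 := by
    linear_combination (D) * e1L + (D*N) * e2L + (D*N) * w1 + ((-1)*D*n0*n1 + (-1)*D*m1^2) * hFN + (D*N*e1 + D*m1*N*phi0 + D*m0*N*phi1) * hS4 + (D*m1^2*N) * repF + (D*N*phi1^2) * hM + ((-1)*D) * w4 + ((-1)*D) * m1sq + ((-1)*q₂^2 + (-1)*q₁*q₃) * repN + (q₂^2*D) * repB + (D*b1^2) * hC + (N) * hQ + ((-1)*D*m1*N*phi0*e1 + (-1)*D*m0*N*phi1*e1 + (-1)*D*m0*m1*N*phi0*phi1 + h*D*m1^2*N*phi1^2 + q₂^2*h*D*b1^2) * htwo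
  have hMainND : (P * D ^ 2 * F + Q * B * F + R * B ^ 2 * D ^ 2) * (N * D) = 0 := by
    linear_combination ((1)) * hX + (D*B*Q + D^3*P) * hFN + (Q + D*N^2*R + D^2*N*B*R) * repN
  have hMain : P * D ^ 2 * F + Q * B * F + R * B ^ 2 * D ^ 2 = 0 := by
    rcases mul_eq_zero.mp hMainND with h' | h'
    · exact h'
    · exact absurd h' (mul_ne_zero hN0 hD0)
  have hden1 : p₃ ^ 4 * g ^ 2 + p₁ ^ 4 = B ^ 2 := by
    linear_combination ((-1)*B + (-1)*p₃^2*g + (-1)*p₁^2) * hB + ((-1)*p₁^2*p₃^2*g) * htwo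
  have hnum1 : (p₁ ^ 2 * p₃ ^ 2 + p₂ ^ 4) * g = P ^ 2 * g := by
    linear_combination ((-1)*g*P + (-1)*p₂^2*g + (-1)*p₁*p₃*g) * hP + ((-1)*p₁*p₂^2*p₃*g) * htwo
  have hden2 : q₃ ^ 4 * h ^ 2 + q₁ ^ 4 = D ^ 2 := by
    linear_combination ((-1)*D + (-1)*q₃^2*h + (-1)*q₁^2) * hD + ((-1)*q₁^2*q₃^2*h) * htwo
  have hnum2 : (q₁ ^ 2 * q₃ ^ 2 + q₂ ^ 4) * h = Q ^ 2 * h := by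
    linear_combination ((-1)*h*Q + (-1)*q₂^2*h + (-1)*q₁*q₃*h) * hQ + ((-1)*q₁*q₂^2*q₃*h) * htwo
  have hden3 : r₃ ^ 4 * f ^ 2 + r₁ ^ 4 = F ^ 2 := by
    linear_combination ((-1)*F + (-1)*r₃^2*f + (-1)*r₁^2) * hF + ((-1)*r₁^2*r₃^2*f) * htwo
  have hnum3 : (r₁ ^ 2 * r₃ ^ 2 + r₂ ^ 4) * f = R ^ 2 * f := by
    linear_combination ((-1)*f*R + (-1)*r₂^2*f + (-1)*r₁*r₃*f) * hR + ((-1)*r₁*r₂^2*r₃*f) * htwo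
  have ea1 : aOf g p₁ p₂ p₃ = P ^ 2 * g / B ^ 2 := by
    unfold aOf; rw [hnum1, hden1]
  have ea2 : aOf h q₁ q₂ q₃ = Q ^ 2 * h / D ^ 2 := by
    unfold aOf; rw [hnum2, hden2]
  have ea3 : aOf f r₁ r₂ r₃ = R ^ 2 * f / F ^ 2 := by
    unfold aOf; rw [hnum3, hden3]
  have key : (P * C * D * F + R * M * B * D) ^ 2 = P ^ 2 * g * (D * F) ^ 2 + Q ^ 2 * h * (B * F) ^ 2 + R ^ 2 * f * (B * D) ^ 2 := by
    linear_combination (h*(P*D^2*F + Q*B*F + R*B^2*D^2)) * hMain + ((-1)*D^2*F^2*P^2) * repg + ((-1)*D^2*B^2*R^2) * repf + (h*D^2*N*B^2*R^2 + h*D^3*B^3*R^2) * repN + (C*D^2*M*B*F*P*R + (-1)*h*B^2*F^2*Q^2 + (-1)*h*D^2*B*F^2*P*Q + (-1)*h*D^2*B^3*F*Q*R + (-1)*h*D^4*F^2*P^2 + (-1)*h*D^4*B^2*F*P*R + (-1)*h*D^4*B^4*R^2) * htwo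
  refine ⟨(P * C * D * F + R * M * B * D) / (B * D * F), ?_⟩
  rw [ea1, ea2, ea3, div_pow,
    div_eq_iff (pow_ne_zero 2 (mul_ne_zero (mul_ne_zero hB0 hD0) hF0))]
  have rhs_eq : (P ^ 2 * g / B ^ 2 + Q ^ 2 * h / D ^ 2 + R ^ 2 * f / F ^ 2) * (B * D * F) ^ 2
      = P ^ 2 * g * (D * F) ^ 2 + Q ^ 2 * h * (B * F) ^ 2 + R ^ 2 * f * (B * D) ^ 2 := by
    field_simp
  rw [rhs_eq]
  exact key
end

section
/- For all f, g ∈ H, one has a(f,g) ≡ a(g,f) (mod K²). -/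
/-- Uniqueness of representations `s² + t²·x` with respect to a non-square `x`
in characteristic 2. -/
lemma uniq_aux {K : Type*} [Field K] (h2 : (2 : K) = 0) {x : K} (hx : x ∉ sqSet K)
    {s t u v : K} (h : s ^ 2 + t ^ 2 * x = u ^ 2 + v ^ 2 * x) : t = v ∧ s = u := by
  have htv : t = v := by
    by_contra hne
    have hd : t + v ≠ 0 := fun h0 => hne (by linear_combination h0 - v * h2)
    apply hx
    refine ⟨(s + u) / (t + v), ?_⟩
    rw [div_pow, div_eq_iff (pow_ne_zero 2 hd)]
    linear_combination h + (s * u + u ^ 2 - x * t ^ 2 - x * t * v) * h2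
  refine ⟨htv, ?_⟩
  have h0 : (s + u) ^ 2 = 0 := by
    linear_combination h + (s * u + u ^ 2) * h2 - (t + v) * x * htv
  have h1 : s + u = 0 := by
    exact pow_eq_zero_iff (by norm_num : (2 : ℕ) ≠ 0) |>.mp h0
  linear_combination h1 - u * h2

set_option maxHeartbeats 2000000 in
/-- **Symmetry**: `a(f,g) ≡ a(g,f) (mod K²)`. -/
theorem a_symm (K : Type*) [Field K] [CharP K 2] (hdim : TwoDimOverSquares K)
    (f g : K) (hf : f ∉ sqSet K) (hg : g ∉ sqSet K)
    (p₀ p₁ p₂ p₃ : K) (hp : f = p₀ ^ 4 + p₁ ^ 4 * g + p₂ ^ 4 * g ^ 2 + p₃ ^ 4 * g ^ 3)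
    (q₀ q₁ q₂ q₃ : K) (hq : g = q₀ ^ 4 + q₁ ^ 4 * f + q₂ ^ 4 * f ^ 2 + q₃ ^ 4 * f ^ 3) :
    aOf g p₁ p₂ p₃ + aOf f q₁ q₂ q₃ ∈ sqSet K := by
  have h2 : (2 : K) = 0 := by
    simpa using CharP.cast_eq_zero K 2
  -- abbreviations (written out explicitly everywhere):
  -- A = p₀² + p₂²g, B = p₁² + p₃²g, E = q₁² + q₃²f, F = q₀² + q₂²f
  have hfAB : f = (p₀ ^ 2 + p₂ ^ 2 * g) ^ 2 + (p₁ ^ 2 + p₃ ^ 2 * g) ^ 2 * g := by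
    linear_combination hp - (p₀ ^ 2 * p₂ ^ 2 * g + p₁ ^ 2 * p₃ ^ 2 * g ^ 2) * h2
  have hgFE : g = (q₀ ^ 2 + q₂ ^ 2 * f) ^ 2 + (q₁ ^ 2 + q₃ ^ 2 * f) ^ 2 * f := by
    linear_combination hq - (q₀ ^ 2 * q₂ ^ 2 * f + q₁ ^ 2 * q₃ ^ 2 * f ^ 2) * h2
  have hBne : (p₁ ^ 2 + p₃ ^ 2 * g) ≠ 0 := by
    intro h0
    exact hf ⟨p₀ ^ 2 + p₂ ^ 2 * g, by rw [hfAB, h0]; ring⟩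
  have hEne : (q₁ ^ 2 + q₃ ^ 2 * f) ≠ 0 := by
    intro h0
    exact hg ⟨q₀ ^ 2 + q₂ ^ 2 * f, by rw [hgFE, h0]; ring⟩
  -- key identity forcing E·B = 1
  have key : g * (1 + (q₁ ^ 2 + q₃ ^ 2 * f) * (p₁ ^ 2 + p₃ ^ 2 * g)) ^ 2
      = ((q₀ ^ 2 + q₂ ^ 2 * f) + (q₁ ^ 2 + q₃ ^ 2 * f) * (p₀ ^ 2 + p₂ ^ 2 * g)) ^ 2 := by
    linear_combination hgFE + (q₁ ^ 2 + q₃ ^ 2 * f) ^ 2 * hfAB +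
      ((q₁ ^ 2 + q₃ ^ 2 * f) * (p₁ ^ 2 + p₃ ^ 2 * g) * g
        + (q₁ ^ 2 + q₃ ^ 2 * f) ^ 2 * (p₁ ^ 2 + p₃ ^ 2 * g) ^ 2 * g
        - (q₀ ^ 2 + q₂ ^ 2 * f) * (q₁ ^ 2 + q₃ ^ 2 * f) * (p₀ ^ 2 + p₂ ^ 2 * g)) * h2
  have hEB : (q₁ ^ 2 + q₃ ^ 2 * f) * (p₁ ^ 2 + p₃ ^ 2 * g) = 1 := by
    by_contra hne
    have hd : 1 + (q₁ ^ 2 + q₃ ^ 2 * f) * (p₁ ^ 2 + p₃ ^ 2 * g) ≠ 0 := by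
      intro h0
      exact hne (by linear_combination h0 - h2)
    apply hg
    refine ⟨((q₀ ^ 2 + q₂ ^ 2 * f) + (q₁ ^ 2 + q₃ ^ 2 * f) * (p₀ ^ 2 + p₂ ^ 2 * g)) /
      (1 + (q₁ ^ 2 + q₃ ^ 2 * f) * (p₁ ^ 2 + p₃ ^ 2 * g)), ?_⟩
    rw [div_pow, div_eq_iff (pow_ne_zero 2 hd)]
    exact key.symm
  have hFEA : (q₀ ^ 2 + q₂ ^ 2 * f) = (q₁ ^ 2 + q₃ ^ 2 * f) * (p₀ ^ 2 + p₂ ^ 2 * g) := by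
    have h0 : ((q₀ ^ 2 + q₂ ^ 2 * f) + (q₁ ^ 2 + q₃ ^ 2 * f) * (p₀ ^ 2 + p₂ ^ 2 * g)) ^ 2 = 0 := by
      linear_combination -key + g * ((q₁ ^ 2 + q₃ ^ 2 * f) * (p₁ ^ 2 + p₃ ^ 2 * g) + 3) * hEB
        + 2 * g * h2
    have h1 := pow_eq_zero_iff (by norm_num : (2 : ℕ) ≠ 0) |>.mp h0
    linear_combination h1 - (q₁ ^ 2 + q₃ ^ 2 * f) * (p₀ ^ 2 + p₂ ^ 2 * g) * h2
  have hEB2 : (q₁ ^ 2 + q₃ ^ 2 * f) * (p₁ ^ 2 + p₃ ^ 2 * g) ^ 2 = (p₁ ^ 2 + p₃ ^ 2 * g) := by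
    linear_combination (p₁ ^ 2 + p₃ ^ 2 * g) * hEB
  -- first component identity: E·B² = B
  have e1 : (q₁ * (p₁ ^ 2 + p₃ ^ 2 * g) + q₃ * (p₀ ^ 2 + p₂ ^ 2 * g) * (p₁ ^ 2 + p₃ ^ 2 * g)) ^ 2
      + (q₃ * (p₁ ^ 2 + p₃ ^ 2 * g) ^ 2) ^ 2 * g = p₁ ^ 2 + p₃ ^ 2 * g := by
    linear_combination hEB2 - q₃ ^ 2 * (p₁ ^ 2 + p₃ ^ 2 * g) ^ 2 * hfAB
      + q₁ * q₃ * (p₀ ^ 2 + p₂ ^ 2 * g) * (p₁ ^ 2 + p₃ ^ 2 * g) ^ 2 * h2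
  obtain ⟨e1a, e1b⟩ := uniq_aux h2 hg (by linear_combination e1 :
    (q₁ * (p₁ ^ 2 + p₃ ^ 2 * g) + q₃ * (p₀ ^ 2 + p₂ ^ 2 * g) * (p₁ ^ 2 + p₃ ^ 2 * g)) ^ 2
      + (q₃ * (p₁ ^ 2 + p₃ ^ 2 * g) ^ 2) ^ 2 * g = p₁ ^ 2 + p₃ ^ 2 * g)
  -- second component identity: F·B² = A·B
  have hFB : (q₀ ^ 2 + q₂ ^ 2 * f) * (p₁ ^ 2 + p₃ ^ 2 * g) ^ 2
      = (p₀ ^ 2 + p₂ ^ 2 * g) * (p₁ ^ 2 + p₃ ^ 2 * g) := by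
    linear_combination (p₁ ^ 2 + p₃ ^ 2 * g) ^ 2 * hFEA
      + (p₀ ^ 2 + p₂ ^ 2 * g) * (p₁ ^ 2 + p₃ ^ 2 * g) * hEB
  have e2 : (q₀ * (p₁ ^ 2 + p₃ ^ 2 * g) + q₂ * (p₀ ^ 2 + p₂ ^ 2 * g) * (p₁ ^ 2 + p₃ ^ 2 * g)) ^ 2
      + (q₂ * (p₁ ^ 2 + p₃ ^ 2 * g) ^ 2) ^ 2 * g
      = (p₀ * p₁ + p₂ * p₃ * g) ^ 2 + (p₀ * p₃ + p₁ * p₂) ^ 2 * g := by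
    linear_combination hFB - q₂ ^ 2 * (p₁ ^ 2 + p₃ ^ 2 * g) ^ 2 * hfAB
      + (q₀ * q₂ * (p₀ ^ 2 + p₂ ^ 2 * g) * (p₁ ^ 2 + p₃ ^ 2 * g) ^ 2
        - 2 * p₀ * p₁ * p₂ * p₃ * g) * h2
  obtain ⟨e2a, _⟩ := uniq_aux h2 hg e2
  -- the crucial relation  p₁p₃ + p₂² = (q₁q₃ + q₂²)·B³
  have hDB : (q₁ * q₃ + q₂ ^ 2) * (p₁ ^ 2 + p₃ ^ 2 * g) ^ 4
      = (p₁ * p₃ + p₂ ^ 2) * (p₁ ^ 2 + p₃ ^ 2 * g) := by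
    linear_combination (q₂ * (p₁ ^ 2 + p₃ ^ 2 * g) ^ 2 + p₀ * p₃ + p₁ * p₂) * e2a
      + ((p₁ ^ 2 + p₃ ^ 2 * g) * (q₁ * (p₁ ^ 2 + p₃ ^ 2 * g)
          + q₃ * (p₀ ^ 2 + p₂ ^ 2 * g) * (p₁ ^ 2 + p₃ ^ 2 * g) - p₁)
        + p₁ * (p₁ ^ 2 + p₃ ^ 2 * g)
        - q₃ * (p₀ ^ 2 + p₂ ^ 2 * g) * (p₁ ^ 2 + p₃ ^ 2 * g) ^ 2
        - p₃ * (p₀ ^ 2 + p₂ ^ 2 * g)) * e1a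
      + p₃ * (p₁ ^ 2 + p₃ ^ 2 * g) * e1b
      + (p₀ * p₁ * p₂ * p₃ - p₂ ^ 2 * p₃ ^ 2 * g) * h2
  have hC : (p₁ * p₃ + p₂ ^ 2) = (q₁ * q₃ + q₂ ^ 2) * (p₁ ^ 2 + p₃ ^ 2 * g) ^ 3 :=
    mul_right_cancel₀ hBne (by linear_combination -hDB)
  -- rewrite the two denominators as honest squares
  have hd1 : p₃ ^ 4 * g ^ 2 + p₁ ^ 4 = (p₁ ^ 2 + p₃ ^ 2 * g) ^ 2 := by
    linear_combination -(p₁ ^ 2 * p₃ ^ 2 * g) * h2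
  have hd2 : q₃ ^ 4 * f ^ 2 + q₁ ^ 4 = (q₁ ^ 2 + q₃ ^ 2 * f) ^ 2 := by
    linear_combination -(q₁ ^ 2 * q₃ ^ 2 * f) * h2
  -- the square root of a(f,g) + a(g,f)
  refine ⟨(q₁ * q₃ + q₂ ^ 2) * (p₀ ^ 2 + p₂ ^ 2 * g) * (p₁ ^ 2 + p₃ ^ 2 * g), ?_⟩
  simp only [aOf]
  rw [hd1, hd2,
    div_add_div _ _ (pow_ne_zero 2 hBne) (pow_ne_zero 2 hEne),
    eq_div_iff (mul_ne_zero (pow_ne_zero 2 hBne) (pow_ne_zero 2 hEne))]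
  linear_combination
    ((q₁ * q₃ + q₂ ^ 2) ^ 2 * (p₀ ^ 2 + p₂ ^ 2 * g) ^ 2 * (p₁ ^ 2 + p₃ ^ 2 * g) ^ 2
        - (q₁ * q₃ + q₂ ^ 2) ^ 2 * (p₁ ^ 2 + p₃ ^ 2 * g) ^ 4 * g)
      * ((q₁ ^ 2 + q₃ ^ 2 * f) * (p₁ ^ 2 + p₃ ^ 2 * g) + 1) * hEB
      - (q₁ * q₃ + q₂ ^ 2) ^ 2 * (p₁ ^ 2 + p₃ ^ 2 * g) ^ 2 * hfAB
      - g * (q₁ ^ 2 + q₃ ^ 2 * f) ^ 2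
        * ((p₁ * p₃ + p₂ ^ 2) + (q₁ * q₃ + q₂ ^ 2) * (p₁ ^ 2 + p₃ ^ 2 * g) ^ 3) * hC
      - (q₁ * q₃ + q₂ ^ 2) ^ 2 * (p₁ ^ 2 + p₃ ^ 2 * g) ^ 4 * g * h2
      + (p₁ * p₃ * p₂ ^ 2 * g * (q₁ ^ 2 + q₃ ^ 2 * f) ^ 2
        + q₁ * q₃ * q₂ ^ 2 * f * (p₁ ^ 2 + p₃ ^ 2 * g) ^ 2) * h2
end

section
/- For all f, g ∈ H, the element 1/g lies in H and a(f,g) ≡ a(f, 1/g) (mod K²). -/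
/-- If `g` is not a square, then `y² + z²·g = 0` forces `y = z = 0`. -/
lemma indep_of_not_sq {K : Type*} [Field K] [CharP K 2] {g : K} (hg : g ∉ sqSet K)
    {y z : K} (h : y ^ 2 + z ^ 2 * g = 0) : y = 0 ∧ z = 0 := by
  have h2 : (2 : K) = 0 := by exact_mod_cast CharP.cast_eq_zero K 2
  by_cases hz : z = 0
  · refine ⟨?_, hz⟩
    have hy : y ^ 2 = 0 := by rw [hz] at h; simpa using h
    exact pow_eq_zero_iff two_ne_zero |>.mp hy
  · exfalso
    apply hg
    refine ⟨y / z, ?_⟩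
    field_simp
    linear_combination h - z ^ 2 * g * h2

/-- **Inversion invariance**: for `f, g ∈ H`, one has `1/g ∈ H` and
`a(f,g) ≡ a(f, 1/g) (mod K²)`. -/
theorem a_inv (K : Type*) [Field K] [CharP K 2] (hdim : TwoDimOverSquares K)
    (f g : K) (hf : f ∉ sqSet K) (hg : g ∉ sqSet K)
    (p₀ p₁ p₂ p₃ : K) (hp : f = p₀ ^ 4 + p₁ ^ 4 * g + p₂ ^ 4 * g ^ 2 + p₃ ^ 4 * g ^ 3)
    (q₀ q₁ q₂ q₃ : K)
    (hq : f = q₀ ^ 4 + q₁ ^ 4 * g⁻¹ + q₂ ^ 4 * g⁻¹ ^ 2 + q₃ ^ 4 * g⁻¹ ^ 3) :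
    g⁻¹ ∉ sqSet K ∧ aOf g p₁ p₂ p₃ + aOf g⁻¹ q₁ q₂ q₃ ∈ sqSet K := by
  have h2 : (2 : K) = 0 := by exact_mod_cast CharP.cast_eq_zero K 2
  have hg0 : g ≠ 0 := by rintro rfl; exact hg ⟨0, by ring⟩
  have hginv : g⁻¹ ∉ sqSet K := by
    rintro ⟨y, hy⟩
    have hy0 : y ≠ 0 := by
      rintro rfl
      rw [show (0:K)^2 = 0 by ring] at hy
      exact hg0 (inv_eq_zero.mp hy.symm)
    refine hg ⟨y⁻¹, ?_⟩
    rw [inv_pow, hy, inv_inv]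
  refine ⟨hginv, ?_⟩
  -- clear denominators in hq and combine with hp
  have h : (p₀ ^ 4 + p₁ ^ 4 * g + p₂ ^ 4 * g ^ 2 + p₃ ^ 4 * g ^ 3) * g ^ 3
      = q₀ ^ 4 * g ^ 3 + q₁ ^ 4 * g ^ 2 + q₂ ^ 4 * g + q₃ ^ 4 := by
    rw [← hp, hq]; field_simp
  -- key: independence over K², applied twice
  have hu := indep_of_not_sq hg
    (y := q₃ ^ 2 + p₁ ^ 2 * g ^ 2 + (q₁ ^ 2 + p₃ ^ 2 * g ^ 2) * g)
    (z := q₂ ^ 2 + p₂ ^ 2 * g ^ 2 + (q₀ ^ 2 + p₀ ^ 2) * g)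
    (by linear_combination h +
      (q₃ ^ 2 * p₁ ^ 2 * g ^ 2 + q₁ ^ 2 * p₃ ^ 2 * g ^ 4 +
        (q₃ ^ 2 + p₁ ^ 2 * g ^ 2) * (q₁ ^ 2 + p₃ ^ 2 * g ^ 2) * g +
        (q₂ ^ 2 * p₂ ^ 2 * g ^ 2 + q₀ ^ 2 * p₀ ^ 2 * g ^ 2 +
          (q₂ ^ 2 + p₂ ^ 2 * g ^ 2) * (q₀ ^ 2 + p₀ ^ 2) * g) * g +
        (q₀ ^ 4 * g ^ 3 + q₁ ^ 4 * g ^ 2 + q₂ ^ 4 * g + q₃ ^ 4)) * h2)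
  have hu1 := indep_of_not_sq hg (y := q₃ + p₁ * g) (z := q₁ + p₃ * g)
    (by linear_combination hu.1 + (q₃ * p₁ * g + q₁ * p₃ * g ^ 2) * h2)
  have hv1 := indep_of_not_sq hg (y := q₂ + p₂ * g) (z := q₀ + p₀)
    (by linear_combination hu.2 + (q₂ * p₂ * g + q₀ * p₀ * g) * h2)
  have e3 : q₃ = p₁ * g := by linear_combination hu1.1 - p₁ * g * h2
  have e1 : q₁ = p₃ * g := by linear_combination hu1.2 - p₃ * g * h2
  have e2 : q₂ = p₂ * g := by linear_combination hv1.1 - p₂ * g * h2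
  subst e1 e2 e3
  by_cases hd : p₃ ^ 4 * g ^ 2 + p₁ ^ 4 = 0
  · refine ⟨0, ?_⟩
    have hd2 : (p₁ * g) ^ 4 * g⁻¹ ^ 2 + (p₃ * g) ^ 4 = g ^ 2 * (p₃ ^ 4 * g ^ 2 + p₁ ^ 4) := by
      field_simp; ring
    unfold aOf
    rw [hd, hd2, hd, mul_zero, div_zero, div_zero, add_zero]
    ring
  · have hd2 : (p₁ * g) ^ 4 * g⁻¹ ^ 2 + (p₃ * g) ^ 4 ≠ 0 := by
      have : (p₁ * g) ^ 4 * g⁻¹ ^ 2 + (p₃ * g) ^ 4 = g ^ 2 * (p₃ ^ 4 * g ^ 2 + p₁ ^ 4) := by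
        field_simp; ring
      rw [this]
      exact mul_ne_zero (pow_ne_zero _ hg0) hd
    have heq : aOf g⁻¹ (p₃ * g) (p₂ * g) (p₁ * g) = aOf g p₁ p₂ p₃ := by
      unfold aOf
      rw [div_eq_div_iff hd2 hd]
      field_simp
      ring
    rw [heq]
    exact ⟨0, by rw [CharTwo.add_self_eq_zero]; ring⟩
end

section
/- For all f, g ∈ H and all s ∈ K \ {0}, t ∈ K, the element s⁴·g + t⁴ lies in H and a(f,g) ≡ a(f, s⁴·g + t⁴) (mod K²). -/
/-!
Let `h` be a formal fourth root of `g`. In characteristic 2, `f = F(h)⁴` for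
`F = p₀ + p₁X + p₂X² + p₃X³`, and since `s⁴g + t⁴ = (sh + t)⁴`, also `f = G(sh + t)⁴` for
`G = q₀ + q₁X + q₂X² + q₃X³`. As `g ∉ K²`, the sum `K² + K²g` is direct, hence so is
`K⁴ + K⁴g + K⁴g² + K⁴g³`, and `F` is `G(sX + t)` with its coefficients reduced mod 2.
By Frobenius, `a(f,g) = g·ρ²` with `ρ = (f₁f₃ + f₂²)/(f₃²g + f₁²)`. If `r` is this ratio for `G`
with respect to `s⁴g + t⁴`, the one for `F` is `s²r`, so
`a(f,g) + a(f, s⁴g + t⁴) = (s⁴g + s⁴g + t⁴)·r² = (t²r)²`.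
-/

section CharTwoRing

variable {R : Type*} [CommRing R] [CharP R 2]

theorem quartic_eq_sq_add_sq_mul (p₀ p₁ p₂ p₃ g : R) :
    p₀ ^ 4 + p₁ ^ 4 * g + p₂ ^ 4 * g ^ 2 + p₃ ^ 4 * g ^ 3 =
      (p₀ ^ 2 + p₂ ^ 2 * g) ^ 2 + (p₁ ^ 2 + p₃ ^ 2 * g) ^ 2 * g := by
  ring_nf; reduce_mod_char!

theorem quartic_affine_subst (q₀ q₁ q₂ q₃ s t g : R) :
    q₀ ^ 4 + q₁ ^ 4 * (s ^ 4 * g + t ^ 4) + q₂ ^ 4 * (s ^ 4 * g + t ^ 4) ^ 2 +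
        q₃ ^ 4 * (s ^ 4 * g + t ^ 4) ^ 3 =
      (q₀ + q₁ * t + q₂ * t ^ 2 + q₃ * t ^ 3) ^ 4 + (s * (q₁ + q₃ * t ^ 2)) ^ 4 * g +
        (s ^ 2 * (q₂ + q₃ * t)) ^ 4 * g ^ 2 + (s ^ 3 * q₃) ^ 4 * g ^ 3 := by
  ring_nf; reduce_mod_char!

end CharTwoRing

section CharTwoField

variable {K : Type*} [Field K] [CharP K 2]

theorem mem_sqSet_of_mul_add_mem {a b g : K} (ha : a ≠ 0) (ha' : a ∈ sqSet K)
    (hb : b ∈ sqSet K) (h : a * g + b ∈ sqSet K) : g ∈ sqSet K := by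
  obtain ⟨x, rfl⟩ := ha'
  obtain ⟨y, rfl⟩ := hb
  obtain ⟨z, hz⟩ := h
  refine ⟨(z + y) / x, ?_⟩
  rw [div_pow, CharTwo.add_sq, hz, CharTwo.add_cancel_right, mul_div_cancel_left₀ _ ha]

theorem sq_add_sq_mul_inj {g A B A' B' : K} (hg : g ∉ sqSet K)
    (h : A ^ 2 + B ^ 2 * g = A' ^ 2 + B' ^ 2 * g) : A = A' ∧ B = B' := by
  have hsq : (B + B') ^ 2 * g + 0 = (A + A') ^ 2 := by
    linear_combination (norm := (ring_nf; reduce_mod_char!)) h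
  have hB : B = B' := by
    by_contra hne
    refine hg (mem_sqSet_of_mul_add_mem ?_ ⟨B + B', rfl⟩ ⟨0, zero_pow two_ne_zero⟩ ⟨_, hsq.symm⟩)
    exact pow_ne_zero 2 (mt CharTwo.add_eq_zero.mp hne)
  subst hB
  exact ⟨CharTwo.sq_inj.mp (add_right_cancel h), rfl⟩

theorem quartic_coeffs_inj {g p₀ p₁ p₂ p₃ q₀ q₁ q₂ q₃ : K} (hg : g ∉ sqSet K)
    (h : p₀ ^ 4 + p₁ ^ 4 * g + p₂ ^ 4 * g ^ 2 + p₃ ^ 4 * g ^ 3 =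
      q₀ ^ 4 + q₁ ^ 4 * g + q₂ ^ 4 * g ^ 2 + q₃ ^ 4 * g ^ 3) :
    p₀ = q₀ ∧ p₁ = q₁ ∧ p₂ = q₂ ∧ p₃ = q₃ := by
  rw [quartic_eq_sq_add_sq_mul, quartic_eq_sq_add_sq_mul] at h
  obtain ⟨h₀₂, h₁₃⟩ := sq_add_sq_mul_inj hg h
  obtain ⟨h₀, h₂⟩ := sq_add_sq_mul_inj hg h₀₂
  obtain ⟨h₁, h₃⟩ := sq_add_sq_mul_inj hg h₁₃
  exact ⟨h₀, h₁, h₂, h₃⟩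

noncomputable def aRatio (g f₁ f₂ f₃ : K) : K :=
  (f₁ * f₃ + f₂ ^ 2) / (f₃ ^ 2 * g + f₁ ^ 2)

theorem aOf_eq_mul_aRatio_sq (g f₁ f₂ f₃ : K) : aOf g f₁ f₂ f₃ = g * aRatio g f₁ f₂ f₃ ^ 2 := by
  rw [aOf, aRatio, div_pow, mul_div_assoc', mul_comm g]
  congr 1 <;> ring_nf <;> reduce_mod_char!

theorem aRatio_affine (q₁ q₂ q₃ s t g : K) :
    aRatio g (s * (q₁ + q₃ * t ^ 2)) (s ^ 2 * (q₂ + q₃ * t)) (s ^ 3 * q₃) =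
      s ^ 2 * aRatio (s ^ 4 * g + t ^ 4) q₁ q₂ q₃ := by
  rcases eq_or_ne s 0 with rfl | hs
  · simp [aRatio]
  have hnum : s * (q₁ + q₃ * t ^ 2) * (s ^ 3 * q₃) + (s ^ 2 * (q₂ + q₃ * t)) ^ 2 =
      s ^ 2 * (s ^ 2 * (q₁ * q₃ + q₂ ^ 2)) := by
    ring_nf; reduce_mod_char!
  have hden : (s ^ 3 * q₃) ^ 2 * g + (s * (q₁ + q₃ * t ^ 2)) ^ 2 =
      s ^ 2 * (q₃ ^ 2 * (s ^ 4 * g + t ^ 4) + q₁ ^ 2) := by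
    ring_nf; reduce_mod_char!
  rw [aRatio, aRatio, hnum, hden, mul_div_mul_left _ _ (pow_ne_zero 2 hs), mul_div_assoc]

end CharTwoField

theorem a_affine_general (K : Type*) [Field K] [CharP K 2]
    (f g : K) (hg : g ∉ sqSet K)
    (s t : K) (hs : s ≠ 0)
    (p₀ p₁ p₂ p₃ : K) (hp : f = p₀ ^ 4 + p₁ ^ 4 * g + p₂ ^ 4 * g ^ 2 + p₃ ^ 4 * g ^ 3)
    (q₀ q₁ q₂ q₃ : K)
    (hq : f = q₀ ^ 4 + q₁ ^ 4 * (s ^ 4 * g + t ^ 4) + q₂ ^ 4 * (s ^ 4 * g + t ^ 4) ^ 2 +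
      q₃ ^ 4 * (s ^ 4 * g + t ^ 4) ^ 3) :
    (s ^ 4 * g + t ^ 4) ∉ sqSet K ∧
      aOf g p₁ p₂ p₃ + aOf (s ^ 4 * g + t ^ 4) q₁ q₂ q₃ ∈ sqSet K := by
  have hg' : s ^ 4 * g + t ^ 4 ∉ sqSet K := fun h =>
    hg (mem_sqSet_of_mul_add_mem (pow_ne_zero 4 hs) ⟨s ^ 2, by ring⟩ ⟨t ^ 2, by ring⟩ h)
  obtain ⟨-, rfl, rfl, rfl⟩ :=
    quartic_coeffs_inj hg (hp.symm.trans (hq.trans (quartic_affine_subst q₀ q₁ q₂ q₃ s t g)))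
  refine ⟨hg', t ^ 2 * aRatio (s ^ 4 * g + t ^ 4) q₁ q₂ q₃, ?_⟩
  rw [aOf_eq_mul_aRatio_sq, aOf_eq_mul_aRatio_sq, aRatio_affine]
  ring_nf; reduce_mod_char!

/-- **Affine invariance**: for `f, g ∈ H`, `s ≠ 0` and `t ∈ K`, one has
`s⁴·g + t⁴ ∈ H` and `a(f,g) ≡ a(f, s⁴·g + t⁴) (mod K²)`. -/
theorem a_affine (K : Type*) [Field K] [CharP K 2] (hdim : TwoDimOverSquares K)
    (f g : K) (hf : f ∉ sqSet K) (hg : g ∉ sqSet K)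
    (s t : K) (hs : s ≠ 0)
    (p₀ p₁ p₂ p₃ : K) (hp : f = p₀ ^ 4 + p₁ ^ 4 * g + p₂ ^ 4 * g ^ 2 + p₃ ^ 4 * g ^ 3)
    (q₀ q₁ q₂ q₃ : K)
    (hq : f = q₀ ^ 4 + q₁ ^ 4 * (s ^ 4 * g + t ^ 4) + q₂ ^ 4 * (s ^ 4 * g + t ^ 4) ^ 2 +
      q₃ ^ 4 * (s ^ 4 * g + t ^ 4) ^ 3) :
    (s ^ 4 * g + t ^ 4) ∉ sqSet K ∧
      aOf g p₁ p₂ p₃ + aOf (s ^ 4 * g + t ^ 4) q₁ q₂ q₃ ∈ sqSet K :=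
  a_affine_general K f g hg s t hs p₀ p₁ p₂ p₃ hp q₀ q₁ q₂ q₃ hq
end

section
/- For all f, g ∈ H, the following are equivalent: (1) a(f,g) ∈ K²; (2) there exist a, b, c, d ∈ K with a·d ≠ b·c such that f = (a⁴·g + b⁴)/(c⁴·g + d⁴). (That is, a(f,g) ≡ 0 (mod K²) if and only if f and g lie in the same Γ-orbit, where Γ = PGL₂(K⁴) acts on H by fractional linear transformations.) -/
/-- If `u² = v²·g` with `g` a nonsquare, then `u = v = 0`. -/
lemma key_aux {K : Type*} [Field K] [CharP K 2] {g : K} (hg : g ∉ sqSet K)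
    {u v : K} (huv : u ^ 2 = v ^ 2 * g) : v = 0 ∧ u = 0 := by
  have hv : v = 0 := by
    by_contra hv
    exact hg ⟨u / v, by rw [div_pow, div_eq_iff (pow_ne_zero 2 hv)]; linear_combination huv⟩
  subst hv
  have hu : u ^ 2 = 0 := by simpa using huv
  exact ⟨rfl, by simpa using sq_eq_zero_iff.mp hu⟩

/-- `{1, g, g², g³}` is linearly independent over `K⁴` when `g ∉ K²` (char 2). -/
lemma indep_aux {K : Type*} [Field K] [CharP K 2] {g : K} (hg : g ∉ sqSet K)
    {x₀ x₁ x₂ x₃ : K}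
    (h : x₀ ^ 4 + x₁ ^ 4 * g + x₂ ^ 4 * g ^ 2 + x₃ ^ 4 * g ^ 3 = 0) :
    x₀ = 0 ∧ x₁ = 0 ∧ x₂ = 0 ∧ x₃ = 0 := by
  have h2 : (2 : K) = 0 := by exact_mod_cast CharP.cast_eq_zero K 2
  have h1 : (x₀ ^ 2 + x₂ ^ 2 * g) ^ 2 = (x₁ ^ 2 + x₃ ^ 2 * g) ^ 2 * g := by
    linear_combination h + (-(g * x₁ ^ 4) + g * x₀ ^ 2 * x₂ ^ 2 - g ^ 2 * x₁ ^ 2 * x₃ ^ 2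
      - g ^ 3 * x₃ ^ 4) * h2
  obtain ⟨h13, h02⟩ := key_aux hg h1
  have e1 : x₁ ^ 2 = x₃ ^ 2 * g := by linear_combination h13 - x₃ ^ 2 * g * h2
  obtain ⟨h3, h1'⟩ := key_aux hg e1
  have e0 : x₀ ^ 2 = x₂ ^ 2 * g := by linear_combination h02 - x₂ ^ 2 * g * h2
  obtain ⟨h2', h0⟩ := key_aux hg e0
  exact ⟨h0, h1', h2', h3⟩

/-- `a(f,g) ≡ 0 (mod K²)` if and only if `f` and `g` lie in the same orbit of
`Γ = PGL₂(K⁴)` acting by fractional linear transformations. -/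
theorem a_eq_zero_iff_same_orbit (K : Type*) [Field K] [CharP K 2]
    (hdim : TwoDimOverSquares K)
    (f g : K) (hf : f ∉ sqSet K) (hg : g ∉ sqSet K)
    (p₀ p₁ p₂ p₃ : K) (hp : f = p₀ ^ 4 + p₁ ^ 4 * g + p₂ ^ 4 * g ^ 2 + p₃ ^ 4 * g ^ 3) :
    aOf g p₁ p₂ p₃ ∈ sqSet K ↔
      ∃ a b c d : K, a * d ≠ b * c ∧ f = (a ^ 4 * g + b ^ 4) / (c ^ 4 * g + d ^ 4) := by
  have h2 : (2 : K) = 0 := by exact_mod_cast CharP.cast_eq_zero K 2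
  constructor
  · rintro ⟨t, ht⟩
    have hden' : p₁ ^ 2 + p₃ ^ 2 * g ≠ 0 := by
      intro h0
      have e : p₁ ^ 2 = p₃ ^ 2 * g := by linear_combination h0 - p₃ ^ 2 * g * h2
      obtain ⟨h3, h1⟩ := key_aux hg e
      exact hf ⟨p₀ ^ 2 + p₂ ^ 2 * g, by
        rw [hp, h3, h1]; linear_combination p₀ ^ 2 * p₂ ^ 2 * g * h2⟩
    have hden : p₃ ^ 4 * g ^ 2 + p₁ ^ 4 ≠ 0 := by
      have e : p₃ ^ 4 * g ^ 2 + p₁ ^ 4 = (p₁ ^ 2 + p₃ ^ 2 * g) ^ 2 := by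
        linear_combination (-(p₁ ^ 2 * p₃ ^ 2 * g)) * h2
      rw [e]; exact pow_ne_zero 2 hden'
    rw [aOf] at ht
    have ht' : t ^ 2 * (p₃ ^ 4 * g ^ 2 + p₁ ^ 4) = (p₁ ^ 2 * p₃ ^ 2 + p₂ ^ 4) * g := by
      rw [ht]; exact div_mul_cancel₀ _ hden
    by_cases hs : p₁ * p₃ + p₂ ^ 2 = 0
    · have hps : p₂ ^ 2 = p₁ * p₃ := by linear_combination hs - p₁ * p₃ * h2
      by_cases hp1 : p₁ = 0
      · have hp2 : p₂ = 0 := by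
          have e : p₂ ^ 2 = 0 := by rw [hps, hp1]; ring
          exact sq_eq_zero_iff.mp e
        have hp3 : p₃ ≠ 0 := by
          intro hp3
          exact hf ⟨p₀ ^ 2, by rw [hp, hp1, hp2, hp3]; ring⟩
        have hgne : g ≠ 0 := by
          intro h0; exact hg ⟨0, by rw [h0]; ring⟩
        refine ⟨p₀, p₃ * g, 1, 0, ?_, ?_⟩
        · simpa using (mul_ne_zero hp3 hgne).symm
        · rw [eq_div_iff (by simpa using hgne : (1 : K) ^ 4 * g + 0 ^ 4 ≠ 0),
            hp, hp1, hp2]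
          ring
      · refine ⟨p₀ * p₂ + p₁ ^ 2, p₀ * p₁ + p₂ * p₃ * g, p₂, p₁, ?_, ?_⟩
        · intro habcd
          have e : p₁ * (p₁ ^ 2 + p₃ ^ 2 * g) = 0 := by
            linear_combination habcd + p₃ * g * hps + p₁ * p₃ ^ 2 * g * h2
          exact (mul_ne_zero hp1 hden') e
        · have hD : p₂ ^ 4 * g + p₁ ^ 4 ≠ 0 := by
            have e : p₂ ^ 4 * g + p₁ ^ 4 = p₁ ^ 2 * (p₁ ^ 2 + p₃ ^ 2 * g) := by
              linear_combination g * (p₂ ^ 2 + p₁ * p₃) * hps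
            rw [e]; exact mul_ne_zero (pow_ne_zero 2 hp1) hden'
          rw [eq_div_iff hD, hp]
          linear_combination
            (p₂ ^ 6 * g ^ 3 + p₁ * p₂ ^ 4 * p₃ * g ^ 3 + p₁ ^ 2 * p₂ ^ 2 * p₃ ^ 2 * g ^ 3
              + p₁ ^ 3 * p₃ ^ 3 * g ^ 3 + 2 * p₁ ^ 4 * p₂ ^ 2 * g ^ 2 + 2 * p₁ ^ 5 * p₃ * g ^ 2
              - 4 * p₀ * p₁ * p₂ * p₃ ^ 3 * g ^ 3 - 6 * p₀ ^ 2 * p₁ ^ 2 * p₃ ^ 2 * g ^ 2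
              - 6 * p₀ ^ 2 * p₁ ^ 4 * g - 4 * p₀ ^ 3 * p₁ ^ 2 * p₂ * g) * hps +
            (p₁ ^ 4 * p₃ ^ 4 * g ^ 3 + p₁ ^ 6 * p₃ ^ 2 * g ^ 2
              - 2 * p₀ * p₁ ^ 2 * p₂ * p₃ ^ 4 * g ^ 3 - 2 * p₀ * p₁ ^ 6 * p₂ * g
              - 3 * p₀ ^ 2 * p₁ ^ 3 * p₃ ^ 3 * g ^ 2 - 3 * p₀ ^ 2 * p₁ ^ 5 * p₃ * g
              - 4 * p₀ ^ 3 * p₁ ^ 3 * p₂ * p₃ * g) * h2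
    · exact (hg ⟨t * (p₁ ^ 2 + p₃ ^ 2 * g) / (p₁ * p₃ + p₂ ^ 2), by
        rw [div_pow, div_eq_iff (pow_ne_zero 2 hs)]
        linear_combination ht' + (-(p₁ * p₂ ^ 2 * p₃ * g) + p₁ ^ 2 * p₃ ^ 2 * g * t ^ 2) * h2⟩).elim
  · rintro ⟨a, b, c, d, hne, hfe⟩
    have hD : c ^ 4 * g + d ^ 4 ≠ 0 := by
      intro h0
      exact hf ⟨0, by rw [hfe, h0, div_zero]; ring⟩
    have heq : (p₀ ^ 4 + p₁ ^ 4 * g + p₂ ^ 4 * g ^ 2 + p₃ ^ 4 * g ^ 3) * (c ^ 4 * g + d ^ 4)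
        = a ^ 4 * g + b ^ 4 := by
      rw [← hp, hfe]; exact div_mul_cancel₀ _ hD
    have hx : (p₀ * d + p₃ * c * g + b) ^ 4 + (p₀ * c + p₁ * d + a) ^ 4 * g
        + (p₁ * c + p₂ * d) ^ 4 * g ^ 2 + (p₂ * c + p₃ * d) ^ 4 * g ^ 3 = 0 := by
      linear_combination heq +
        (b ^ 4 + g * a ^ 4 + 2 * p₃ * g * b ^ 3 * c + 3 * p₃ ^ 2 * g ^ 2 * b ^ 2 * c ^ 2
          + 2 * p₃ ^ 3 * g ^ 3 * b * c ^ 3 + 2 * p₂ * p₃ ^ 3 * g ^ 3 * c * d ^ 3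
          + 3 * p₂ ^ 2 * p₃ ^ 2 * g ^ 3 * c ^ 2 * d ^ 2 + 2 * p₂ ^ 3 * p₃ * g ^ 3 * c ^ 3 * d
          + 2 * p₁ * g * a ^ 3 * d + 2 * p₁ * p₂ ^ 3 * g ^ 2 * c * d ^ 3
          + 3 * p₁ ^ 2 * g * a ^ 2 * d ^ 2 + 3 * p₁ ^ 2 * p₂ ^ 2 * g ^ 2 * c ^ 2 * d ^ 2
          + 2 * p₁ ^ 3 * g * a * d ^ 3 + 2 * p₁ ^ 3 * p₂ * g ^ 2 * c ^ 3 * d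
          + 2 * p₀ * b ^ 3 * d + 2 * p₀ * g * a ^ 3 * c + 6 * p₀ * p₃ * g * b ^ 2 * c * d
          + 6 * p₀ * p₃ ^ 2 * g ^ 2 * b * c ^ 2 * d + 2 * p₀ * p₃ ^ 3 * g ^ 3 * c ^ 3 * d
          + 6 * p₀ * p₁ * g * a ^ 2 * c * d + 6 * p₀ * p₁ ^ 2 * g * a * c * d ^ 2
          + 2 * p₀ * p₁ ^ 3 * g * c * d ^ 3 + 3 * p₀ ^ 2 * b ^ 2 * d ^ 2
          + 3 * p₀ ^ 2 * g * a ^ 2 * c ^ 2 + 6 * p₀ ^ 2 * p₃ * g * b * c * d ^ 2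
          + 3 * p₀ ^ 2 * p₃ ^ 2 * g ^ 2 * c ^ 2 * d ^ 2 + 6 * p₀ ^ 2 * p₁ * g * a * c ^ 2 * d
          + 3 * p₀ ^ 2 * p₁ ^ 2 * g * c ^ 2 * d ^ 2 + 2 * p₀ ^ 3 * b * d ^ 3
          + 2 * p₀ ^ 3 * g * a * c ^ 3 + 2 * p₀ ^ 3 * p₃ * g * c * d ^ 3
          + 2 * p₀ ^ 3 * p₁ * g * c ^ 3 * d) * h2
    obtain ⟨-, -, hx2, hx3⟩ := indep_aux hg hx
    have hps : p₂ ^ 2 = p₁ * p₃ := by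
      by_cases hc : c = 0
      · have hd : d ≠ 0 := by intro hd; exact hD (by rw [hc, hd]; ring)
        have e2 : p₂ = 0 := by
          have e := hx2; rw [hc] at e; simpa [hd] using e
        have e3 : p₃ = 0 := by
          have e := hx3; rw [hc] at e; simpa [hd] using e
        rw [e2, e3]; ring
      · by_cases hd : d = 0
        · have e1 : p₁ = 0 := by
            have e := hx2; rw [hd] at e; simpa [hc] using e
          have e2 : p₂ = 0 := by
            have e := hx3; rw [hd] at e; simpa [hc] using e
          rw [e1, e2]; ring
        · have hq : (p₂ ^ 2 - p₁ * p₃) * (c * d) = 0 := by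
            linear_combination p₂ * d * hx3 - p₃ * d * hx2
          rcases mul_eq_zero.mp hq with h | h
          · exact sub_eq_zero.mp h
          · exact absurd h (mul_ne_zero hc hd)
    have hnum : p₁ ^ 2 * p₃ ^ 2 + p₂ ^ 4 = 0 := by
      linear_combination (-(p₂ ^ 2 + p₁ * p₃)) * hps + p₂ ^ 4 * h2
    exact ⟨0, by rw [aOf, hnum]; simp⟩
end
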